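/- arXiv:0705.4256 — 7 statements merged into one kernel-verified Lean document; each statement's English description precedes it below -/
import Mathlib

section
/- Let q be a prime power, F_q the finite field with q elements, d a positive integer, and C ≥ 1 a real constant. Let A ⊆ F_q satisfy |A| ≥ C^(1/d) · q^(1/2 + 1/(2(2d-1))). Then |dA²| ≥ q · C^(2 - 1/d) / (C^(2 - 1/d) + 1). -/
/-!
Let `N(t)` be the number of ways of writing `t = ∑ aᵢ a'ᵢ` with all `aᵢ, a'ᵢ ∈ A`, so that
`∑ N(t)²` is the collision count of the map `(aᵢ, a'ᵢ)ᵢ ↦ ∑ aᵢ a'ᵢ`. Cauchy–Schwarz gives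
`|A|^(4d) ≤ |dA²| · ∑ N(t)²`. Expanding with a primitive additive character `ψ`,
`q ∑ N(t)² = ∑ᵤ |T(u)|^(2d)` with `T(u) = ∑_{a,b ∈ A} ψ(u a b)`. The term `u = 0` is `|A|^(4d)`;
for `u ≠ 0`, Cauchy–Schwarz and Parseval give `|T(u)|² ≤ q |A|²`, while `∑ᵤ |T(u)|²` is `q` times
the multiplicative energy of `A`, which is at most `|A|³ + |A|²`. Since `q ≤ |A|²` this yields
`q ∑ N(t)² ≤ |A|^(4d) + q^d |A|^(2d+1)`, and the size hypothesis on `A`, raised to the power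
`2d - 1`, says exactly that `C^(2 - 1/d) q^d |A|^(2d+1) ≤ |A|^(4d)`.
-/

open Finset

section Collisions

variable {α β : Type*} [DecidableEq β]

def collisions (s : Finset α) (f : α → β) : ℕ := #{z ∈ s ×ˢ s | f z.1 = f z.2}

lemma collisions_eq_sum_card_fiber (s : Finset α) (f : α → β) :
    collisions s f = ∑ x ∈ s, #{y ∈ s | f x = f y} := by
  simp only [collisions, card_filter, sum_product]

lemma collisions_eq_sum_sq (s : Finset α) (f : α → β) :
    collisions s f = ∑ t ∈ s.image f, #{x ∈ s | f x = t} ^ 2 := by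
  rw [collisions_eq_sum_card_fiber, sum_comp (fun t => #{y ∈ s | t = f y}) f]
  refine sum_congr rfl fun t _ => ?_
  simp_rw [smul_eq_mul, sq, eq_comm (a := t)]

lemma sq_card_le_card_image_mul_collisions (s : Finset α) (f : α → β) :
    #s ^ 2 ≤ #(s.image f) * collisions s f := by
  rw [collisions_eq_sum_sq, card_eq_sum_card_image f s]
  exact sq_sum_le_card_mul_sum_sq

lemma collisions_of_injOn {s : Finset α} {f : α → β} (hf : Set.InjOn f s) :
    collisions s f = #s := by
  rw [collisions_eq_sum_card_fiber, card_eq_sum_ones]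
  refine sum_congr rfl fun x hx => card_eq_one.mpr ⟨x, ?_⟩
  ext y
  simp only [mem_filter, mem_singleton]
  exact ⟨fun ⟨hy, hxy⟩ => (hf hx hy hxy).symm, by rintro rfl; exact ⟨hx, rfl⟩⟩

end Collisions

section MulZero

variable {M₀ : Type*} [MonoidWithZero M₀] [IsLeftCancelMulZero M₀] [DecidableEq M₀]

lemma card_filter_mul_eq_le_card_erase_zero (A : Finset M₀) {t : M₀} (ht : t ≠ 0) :
    #{y ∈ A ×ˢ A | t = y.1 * y.2} ≤ #(A.erase 0) := by
  refine card_le_card_of_injOn Prod.fst (fun y hy => ?_) fun y hy y' hy' h => ?_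
  · simp only [coe_filter, mem_product, Set.mem_ofPred_eq] at hy
    exact mem_erase.mpr ⟨left_ne_zero_of_mul (hy.2 ▸ ht), hy.1.1⟩
  · simp only [coe_filter, Set.mem_ofPred_eq] at hy hy'
    have hy₁ : y.1 ≠ 0 := left_ne_zero_of_mul (hy.2 ▸ ht)
    exact Prod.ext h (mul_left_cancel₀ hy₁ (by rw [← hy.2, h, hy'.2]))

lemma filter_mul_ne_zero_eq_erase_zero_product (A : Finset M₀) :
    {z ∈ A ×ˢ A | ¬ z.1 * z.2 = 0} = A.erase 0 ×ˢ A.erase 0 := by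
  ext z
  simp only [mem_filter, mem_product, mem_erase, mul_eq_zero, not_or]
  tauto

lemma collisions_mul_le (A : Finset M₀) :
    collisions (A ×ˢ A) (fun z => z.1 * z.2) ≤ #A ^ 3 + #A ^ 2 := by
  set m := #(A.erase 0)
  set r₀ := #{z ∈ A ×ˢ A | z.1 * z.2 = 0}
  have hr₀ : r₀ + m ^ 2 = #A ^ 2 := by
    rw [sq, sq, ← card_product, ← card_product, ← filter_mul_ne_zero_eq_erase_zero_product,
      card_filter_add_card_filter_not]
  have hsum : collisions (A ×ˢ A) (fun z => z.1 * z.2) ≤ r₀ * r₀ + m ^ 2 * m := by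
    rw [collisions_eq_sum_card_fiber, ← sum_filter_add_sum_filter_not _ (fun x => x.1 * x.2 = 0)]
    gcongr
    · rw [← smul_eq_mul, ← sum_const]
      exact (sum_congr rfl fun x hx => by
        rw [(mem_filter.mp hx).2]; simp_rw [eq_comm (a := (0 : M₀)), r₀]).le
    · rw [filter_mul_ne_zero_eq_erase_zero_product, sq, ← card_product, ← smul_eq_mul,
        ← sum_const]
      refine sum_le_sum fun x hx => card_filter_mul_eq_le_card_erase_zero A ?_
      simp only [mem_product, mem_erase] at hx
      exact mul_ne_zero hx.1.1 hx.2.1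
  have hm : m ≤ #A := card_erase_le
  have hm' : #A ≤ m + 1 := by have := pred_card_le_card_erase (s := A) (a := 0); omega
  refine hsum.trans ?_
  obtain h | h : #A = m ∨ #A = m + 1 := by omega
  · have : r₀ = 0 := by rw [h] at hr₀; omega
    rw [this, h]
    nlinarith
  · have : r₀ = 2 * m + 1 := by rw [h] at hr₀; nlinarith
    rw [this, h]
    nlinarith

end MulZero

lemma AddChar.map_sum_eq_prod {ι A M : Type*} [AddCommMonoid A] [CommMonoid M]
    (ψ : AddChar A M) (s : Finset ι) (f : ι → A) : ψ (∑ i ∈ s, f i) = ∏ i ∈ s, ψ (f i) := by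
  classical
  induction s using Finset.induction_on with
  | empty => simp
  | insert a s ha ih => rw [sum_insert ha, prod_insert ha, AddChar.map_add_eq_mul, ih]

lemma sum_piFinset_map_mul_sum {ι κ R M : Type*} [Fintype ι] [DecidableEq ι] [CommSemiring R]
    [CommSemiring M] (ψ : AddChar R M) (s : Finset κ) (g : κ → R) (u : R) :
    ∑ p ∈ Fintype.piFinset (fun _ : ι => s), ψ (u * ∑ i, g (p i))
      = (∑ z ∈ s, ψ (u * g z)) ^ Fintype.card ι := by
  simp_rw [mul_sum, AddChar.map_sum_eq_prod]
  rw [sum_prod_piFinset s fun _ z => ψ (u * g z), prod_const, card_univ]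

lemma AddChar.exists_isPrimitive (F : Type*) [Field F] [Fintype F] :
    ∃ ψ : AddChar F ℂ, ψ.IsPrimitive := by
  obtain ⟨ψ, hψ⟩ := (AddChar.exists_apply_ne_zero (a := (1 : F))).mpr one_ne_zero
  exact ⟨ψ, .of_ne_one fun h => hψ (by rw [h, AddChar.one_apply])⟩

section Fourier

variable {F : Type*} [Field F] [Fintype F] [DecidableEq F] {ψ : AddChar F ℂ}

lemma sum_sq_norm_sum_mul_eq_card_mul_collisions {α : Type*} (hψ : ψ.IsPrimitive)
    (s : Finset α) (f : α → F) :
    ∑ u, ‖∑ x ∈ s, ψ (u * f x)‖ ^ 2 = Fintype.card F * collisions s f := by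
  have hexpand (u : F) : ((‖∑ x ∈ s, ψ (u * f x)‖ ^ 2 : ℝ) : ℂ)
      = ∑ z ∈ s ×ˢ s, ψ (u * (f z.1 - f z.2)) := by
    rw [Complex.ofReal_pow, ← Complex.mul_conj', map_sum, sum_mul_sum, ← sum_product']
    refine sum_congr rfl fun z _ => ?_
    rw [← AddChar.map_neg_eq_conj, ← AddChar.map_add_eq_mul, mul_sub, sub_eq_add_neg]
  have horth (z : α × α) : ∑ u, ψ (u * (f z.1 - f z.2))
      = if f z.1 = f z.2 then (Fintype.card F : ℂ) else 0 := by
    rw [AddChar.sum_mulShift _ hψ]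
    split_ifs <;> simp_all [sub_eq_zero]
  apply Complex.ofReal_injective
  rw [Complex.ofReal_sum]
  simp_rw [hexpand]
  rw [sum_comm, collisions]
  simp_rw [horth]
  rw [sum_ite, sum_const_zero, add_zero, sum_const, nsmul_eq_mul, mul_comm]
  push_cast; rfl

lemma sq_norm_sum_product_le_card_mul_sq (hψ : ψ.IsPrimitive) (A : Finset F) {u : F} (hu : u ≠ 0) :
    ‖∑ z ∈ A ×ˢ A, ψ (u * (z.1 * z.2))‖ ^ 2 ≤ Fintype.card F * #A ^ 2 := by
  have hrow (a : F) : ∑ b ∈ A, ψ (u * (a * b)) = ∑ b ∈ A, ψ (a * (u * b)) := by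
    simp_rw [mul_left_comm]
  calc ‖∑ z ∈ A ×ˢ A, ψ (u * (z.1 * z.2))‖ ^ 2
      ≤ (∑ a ∈ A, ‖∑ b ∈ A, ψ (a * (u * b))‖) ^ 2 := by
        rw [sum_product]; simp_rw [hrow]; gcongr; exact norm_sum_le _ _
    _ ≤ #A * ∑ a ∈ A, ‖∑ b ∈ A, ψ (a * (u * b))‖ ^ 2 := sq_sum_le_card_mul_sum_sq
    _ ≤ #A * ∑ a, ‖∑ b ∈ A, ψ (a * (u * b))‖ ^ 2 := by
        gcongr; exact subset_univ A
    _ = Fintype.card F * #A ^ 2 := by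
        rw [sum_sq_norm_sum_mul_eq_card_mul_collisions hψ,
          collisions_of_injOn (mul_right_injective₀ hu).injOn]
        ring

end Fourier

lemma sum_pow_le_pow_add_mul {ι : Type*} [Fintype ι] [DecidableEq ι] (w : ι → ℝ)
    (hw : ∀ i, 0 ≤ w i) (i₀ : ι) {M : ℝ} (hM : ∀ i ≠ i₀, w i ≤ M) {d : ℕ} (hd : d ≠ 0) :
    ∑ i, w i ^ d ≤ w i₀ ^ d + M ^ (d - 1) * (∑ i, w i - w i₀) := by
  rw [← add_sum_erase _ _ (mem_univ i₀), ← add_sum_erase _ w (mem_univ i₀), add_sub_cancel_left,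
    mul_sum]
  gcongr with i hi
  obtain ⟨k, rfl⟩ := Nat.exists_eq_add_one_of_ne_zero hd
  rw [pow_succ, Nat.add_sub_cancel]
  exact mul_le_mul_of_nonneg_right (pow_le_pow_left₀ (hw i) (hM i (ne_of_mem_erase hi)) k) (hw i)

lemma le_div_of_collision_bounds {q X S E N B : ℝ} (hX : 0 ≤ X) (hE : 0 ≤ E) (hN : 0 < N)
    (hcs : N ≤ S * E) (hmom : q * E ≤ N + B) (hB : X * B ≤ N) : q * X / (X + 1) ≤ S := by
  have hE' : 0 < E := hE.lt_of_ne (by rintro rfl; rw [mul_zero] at hcs; linarith)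
  rw [div_le_iff₀ (by linarith)]
  refine le_of_mul_le_mul_right ?_ hE'
  nlinarith

lemma rpow_mul_pow_le_pow {C q n : ℝ} {d : ℕ} (hd : 0 < d) (hC : 0 ≤ C) (hq : 0 ≤ q)
    (h : C ^ ((1 : ℝ) / d) * q ^ ((1 : ℝ) / 2 + 1 / (2 * (2 * (d : ℝ) - 1))) ≤ n) :
    C ^ ((2 : ℝ) - 1 / d) * q ^ d ≤ n ^ (2 * d - 1) := by
  have hd' : (1 : ℝ) ≤ d := by exact_mod_cast hd
  have hd0 : (d : ℝ) ≠ 0 := by positivity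
  have h2d : 2 * (d : ℝ) - 1 ≠ 0 := by linarith
  have hcast : ((2 * d - 1 : ℕ) : ℝ) = 2 * d - 1 := by
    rw [Nat.cast_sub (by omega)]; push_cast; ring
  have hCexp : (1 : ℝ) / d * (2 * d - 1) = 2 - 1 / d := by field_simp
  have hqexp : ((1 : ℝ) / 2 + 1 / (2 * (2 * d - 1))) * (2 * d - 1) = d := by field_simp; ring
  calc C ^ ((2 : ℝ) - 1 / d) * q ^ d
      = (C ^ ((1 : ℝ) / d) * q ^ ((1 : ℝ) / 2 + 1 / (2 * (2 * (d : ℝ) - 1)))) ^ (2 * d - 1) := by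
        rw [mul_pow, ← Real.rpow_natCast, ← Real.rpow_natCast _ (2 * d - 1),
          ← Real.rpow_natCast (q ^ _), ← Real.rpow_mul hC, ← Real.rpow_mul hq, hcast, hCexp,
          hqexp]
    _ ≤ n ^ (2 * d - 1) := by gcongr

lemma le_sq_of_pow_le_pow_pred {q n d : ℕ} (hq : 0 < q) (hd : d ≠ 0) (h : q ^ d ≤ n ^ (2 * d - 1)) :
    q ≤ n ^ 2 := by
  have hn : 0 < n := by
    rcases Nat.eq_zero_or_pos n with rfl | hn
    · rw [zero_pow (by omega)] at h; exact absurd h (not_le.mpr (pow_pos hq d))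
    · exact hn
  rw [← Nat.pow_le_pow_iff_left hd, ← pow_mul]
  exact h.trans (Nat.pow_le_pow_right hn (by omega))

lemma card_mul_collisions_dotProduct_le {F : Type*} [Field F] [Fintype F] [DecidableEq F]
    (A : Finset F) {d : ℕ} (hd : d ≠ 0) (hA : Fintype.card F ≤ #A ^ 2) :
    (Fintype.card F : ℝ) *
        collisions (Fintype.piFinset fun _ : Fin d => A ×ˢ A) (fun p => ∑ i, (p i).1 * (p i).2)
      ≤ (#A : ℝ) ^ (4 * d) + (Fintype.card F : ℝ) ^ d * (#A : ℝ) ^ (2 * d + 1) := by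
  obtain ⟨ψ, hψ⟩ := AddChar.exists_isPrimitive F
  set q := (Fintype.card F : ℝ)
  set n := (#A : ℝ)
  set w : F → ℝ := fun u => ‖∑ z ∈ A ×ˢ A, ψ (u * (z.1 * z.2))‖ ^ 2
  have hfourier : q * collisions (Fintype.piFinset fun _ : Fin d => A ×ˢ A)
      (fun p => ∑ i, (p i).1 * (p i).2) = ∑ u, w u ^ d := by
    rw [← sum_sq_norm_sum_mul_eq_card_mul_collisions hψ]
    refine sum_congr rfl fun u _ => ?_
    rw [sum_piFinset_map_mul_sum ψ _ (fun z : F × F => z.1 * z.2), Fintype.card_fin, norm_pow,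
      ← pow_mul, ← pow_mul, mul_comm]
  have hw0 : w 0 = n ^ 4 := by simp [w, n]; ring
  have henergy : ∑ u, w u - n ^ 4 ≤ q * n ^ 3 := by
    have hE : (collisions (A ×ˢ A) (fun z => z.1 * z.2) : ℝ) ≤ n ^ 3 + n ^ 2 := by
      simp only [n]; exact_mod_cast collisions_mul_le A
    have hqn : q ≤ n ^ 2 := by simp only [q, n]; exact_mod_cast hA
    rw [sum_sq_norm_sum_mul_eq_card_mul_collisions hψ]
    nlinarith
  calc q * collisions (Fintype.piFinset fun _ : Fin d => A ×ˢ A) (fun p => ∑ i, (p i).1 * (p i).2)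
      = ∑ u, w u ^ d := hfourier
    _ ≤ w 0 ^ d + (q * n ^ 2) ^ (d - 1) * (∑ u, w u - w 0) :=
        sum_pow_le_pow_add_mul w (fun _ => by positivity) 0
          (fun _ hu => sq_norm_sum_product_le_card_mul_sq hψ A hu) hd
    _ ≤ (n ^ 4) ^ d + (q * n ^ 2) ^ (d - 1) * (q * n ^ 3) := by rw [hw0]; gcongr
    _ = n ^ (4 * d) + q ^ d * n ^ (2 * d + 1) := by
        obtain ⟨k, rfl⟩ := Nat.exists_eq_add_one_of_ne_zero hd
        rw [Nat.add_sub_cancel]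
        ring

lemma setOf_sum_mul_eq_image {R : Type*} [CommSemiring R] [DecidableEq R] (A : Finset R)
    (d : ℕ) :
    {t : R | ∃ a a' : Fin d → R, (∀ i, a i ∈ A) ∧ (∀ i, a' i ∈ A) ∧ t = ∑ i, a i * a' i}
      = ((Fintype.piFinset fun _ : Fin d => A ×ˢ A).image fun p => ∑ i, (p i).1 * (p i).2 :
          Set R) := by
  ext t
  simp only [Set.mem_ofPred_eq, coe_image, Set.mem_image, mem_coe, Fintype.mem_piFinset,
    mem_product]
  constructor
  · rintro ⟨a, a', ha, ha', rfl⟩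
    exact ⟨fun i => (a i, a' i), fun i => ⟨ha i, ha' i⟩, rfl⟩
  · rintro ⟨p, hp, rfl⟩
    exact ⟨fun i => (p i).1, fun i => (p i).2, fun i => (hp i).1, fun i => (hp i).2, rfl⟩

/-- If `A ⊆ F_q` with `|A| ≥ C^(1/d) · q^(1/2 + 1/(2(2d-1)))` where `C ≥ 1`, then
`|dA²| ≥ q · C^(2-1/d) / (C^(2-1/d) + 1)`. -/
theorem stmt_1 {F : Type*} [Field F] [Fintype F] (d : ℕ) (hd : 0 < d)
    (C : ℝ) (hC : 1 ≤ C) (A : Finset F)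
    (hA : (A.card : ℝ) ≥
      C ^ ((1 : ℝ) / d) *
        (Fintype.card F : ℝ) ^ ((1 : ℝ) / 2 + 1 / (2 * (2 * (d : ℝ) - 1)))) :
    (Set.ncard {t : F | ∃ a a' : Fin d → F, (∀ i, a i ∈ A) ∧ (∀ i, a' i ∈ A) ∧
        t = ∑ i, a i * a' i} : ℝ) ≥
      (Fintype.card F : ℝ) * C ^ ((2 : ℝ) - 1 / d) / (C ^ ((2 : ℝ) - 1 / d) + 1) := by
  classical
  set Q := Fintype.piFinset fun _ : Fin d => A ×ˢ A
  set dot : (Fin d → F × F) → F := fun p => ∑ i, (p i).1 * (p i).2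
  rw [setOf_sum_mul_eq_image, Set.ncard_coe_finset, ge_iff_le]
  set X := C ^ ((2 : ℝ) - 1 / d)
  have hX : 1 ≤ X := Real.one_le_rpow hC (by
    have : (1 : ℝ) ≤ d := by exact_mod_cast hd
    rw [sub_nonneg, div_le_iff₀ (by linarith)]; linarith)
  have hkey : X * (Fintype.card F : ℝ) ^ d ≤ (#A : ℝ) ^ (2 * d - 1) :=
    rpow_mul_pow_le_pow hd (by linarith) (Nat.cast_nonneg _) hA
  have hqA : Fintype.card F ≤ #A ^ 2 := le_sq_of_pow_le_pow_pred Fintype.card_pos hd.ne'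
    (by exact_mod_cast (le_mul_of_one_le_left (by positivity) hX).trans hkey)
  have hA0 : 0 < #A := Nat.pos_of_ne_zero fun h => by simp [h] at hqA
  have hcs : (#A : ℝ) ^ (4 * d) ≤ #(Q.image dot) * collisions Q dot := by
    have h := sq_card_le_card_image_mul_collisions Q dot
    rw [Fintype.card_piFinset_const, card_product, ← sq, ← pow_mul, ← pow_mul] at h
    rw [show 4 * d = 2 * (d * 2) by ring]
    exact_mod_cast h
  refine le_div_of_collision_bounds (by positivity) (Nat.cast_nonneg _) (by positivity) hcs
    (card_mul_collisions_dotProduct_le A hd.ne' hqA) ?_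
  calc X * ((Fintype.card F : ℝ) ^ d * (#A : ℝ) ^ (2 * d + 1))
      = X * (Fintype.card F : ℝ) ^ d * (#A : ℝ) ^ (2 * d + 1) := by ring
    _ ≤ (#A : ℝ) ^ (2 * d - 1) * (#A : ℝ) ^ (2 * d + 1) := by gcongr
    _ = (#A : ℝ) ^ (4 * d) := by rw [← pow_add]; congr 1; omega
end

section
/- Let q be a prime power, F_q the finite field with q elements, and C ≥ 1 a real constant. If A ⊆ F_q satisfies |A| ≥ C^(1/2) · q^(2/3), then |A² + A²| ≥ q · C^(3/2) / (C^(3/2) + 1). -/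
/-!
Fix a primitive additive character `ψ` of `F`, put `f x = ∑_{a,b ∈ A} ψ (x a b)` and let
`g x = ∑_{t ∈ T} ψ (x t)` for `T` the complement of `A² + A²`. By orthogonality,
`∑_x f(x)² conj (g x)` counts the solutions of `ab + ce = t ∈ T`, so it vanishes, and the term
`x = 0`, which is `|A|⁴ |T|`, must be cancelled by the others. For `x ≠ 0` Cauchy–Schwarz and
Parseval give `|f x|² ≤ q |A|²`; another Cauchy–Schwarz together with Parseval for `f`
(whose `L²` mass is `q` times the multiplicative energy, at most `|A|³ + |A|²`) and for `g` yields
`|T| (|A|³ + q²) ≤ q³`. Since `|A|³ ≥ C^{3/2} q²`, this says `|T| ≤ q / (C^{3/2} + 1)`.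
-/

open Finset
open scoped ComplexConjugate Combinatorics.Additive Pointwise

namespace AddChar

section CommRing

variable {R : Type*} [CommRing R] [Fintype R] [DecidableEq R] {ψ : AddChar R ℂ} {ι κ : Type*}

lemma sum_sum_mulShift (hψ : ψ.IsPrimitive) (s : Finset ι) (u : ι → R) :
    ∑ x, ∑ i ∈ s, ψ (x * u i) = Fintype.card R * #{i ∈ s | u i = 0} := by
  rw [sum_comm]
  simp only [sum_mulShift _ hψ, Nat.cast_ite, CharP.cast_eq_zero, sum_ite, sum_const,
    nsmul_eq_mul, mul_comm, zero_mul, add_zero]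

lemma sum_norm_sq_sum_mulShift (hψ : ψ.IsPrimitive) (s : Finset ι) (u : ι → R) :
    ∑ x, ‖∑ i ∈ s, ψ (x * u i)‖ ^ 2 = Fintype.card R * #{ij ∈ s ×ˢ s | u ij.1 = u ij.2} := by
  have hexpand (x : R) : ((‖∑ i ∈ s, ψ (x * u i)‖ ^ 2 : ℝ) : ℂ) =
      ∑ ij ∈ s ×ˢ s, ψ (x * (u ij.1 - u ij.2)) := by
    push_cast
    rw [← Complex.mul_conj', map_sum, sum_mul_sum, sum_product]
    refine sum_congr rfl fun i _ => sum_congr rfl fun j _ => ?_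
    rw [← map_neg_eq_conj, ← map_add_eq_mul, mul_sub, sub_eq_add_neg]
  apply Complex.ofReal_injective
  rw [Complex.ofReal_sum]
  simp only [hexpand, sum_sum_mulShift hψ, sub_eq_zero]
  norm_cast

lemma sum_norm_sq_sum_mul (hψ : ψ.IsPrimitive) (s : Finset R) :
    ∑ x, ‖∑ t ∈ s, ψ (x * t)‖ ^ 2 = Fintype.card R * #s := by
  simpa [← diag_eq_filter, diag_card] using sum_norm_sq_sum_mulShift hψ s id

lemma sum_erase_zero_norm_sq_sum (s : Finset ι) (u : ι → R) :
    ∑ x ∈ univ.erase 0, ‖∑ i ∈ s, ψ (x * u i)‖ ^ 2 =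
      ∑ x, ‖∑ i ∈ s, ψ (x * u i)‖ ^ 2 - #s ^ 2 := by
  rw [← add_sum_erase _ _ (mem_univ 0)]
  simp

lemma sum_sq_mul_conj_eq_zero (hψ : ψ.IsPrimitive) (s : Finset ι) (t : Finset κ) (u : ι → R)
    (v : κ → R) (h : ∀ i ∈ s, ∀ i' ∈ s, ∀ j ∈ t, u i + u i' ≠ v j) :
    ∑ x, (∑ i ∈ s, ψ (x * u i)) ^ 2 * conj (∑ j ∈ t, ψ (x * v j)) = 0 := by
  have hexpand (x : R) : (∑ i ∈ s, ψ (x * u i)) ^ 2 * conj (∑ j ∈ t, ψ (x * v j)) =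
      ∑ k ∈ (s ×ˢ s) ×ˢ t, ψ (x * (u k.1.1 + u k.1.2 - v k.2)) := by
    have hterm (i i' : ι) (j : κ) : ψ (x * (u i + u i' - v j)) =
        ψ (x * u i) * ψ (x * u i') * conj (ψ (x * v j)) := by
      rw [← map_neg_eq_conj, ← map_add_eq_mul, ← map_add_eq_mul]
      ring_nf
    rw [sq, sum_mul_sum, map_sum, sum_mul]
    simp only [hterm, sum_product, sum_mul_sum]
  simp only [hexpand, sum_sum_mulShift hψ, sub_eq_zero, mul_eq_zero, Nat.cast_eq_zero,
    card_eq_zero, filter_eq_empty_iff, mem_product]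
  exact Or.inr fun k hk => h _ hk.1.1 _ hk.1.2 _ hk.2

end CommRing

lemma norm_sum_mul_mul_sq_le {F : Type*} [Field F] [Fintype F] [DecidableEq F]
    {ψ : AddChar F ℂ} (hψ : ψ.IsPrimitive) (A : Finset F) {x : F} (hx : x ≠ 0) :
    ‖∑ p ∈ A ×ˢ A, ψ (x * (p.1 * p.2))‖ ^ 2 ≤ Fintype.card F * #A ^ 2 := by
  set h : F → ℝ := fun y => ‖∑ b ∈ A, ψ (y * b)‖
  calc ‖∑ p ∈ A ×ˢ A, ψ (x * (p.1 * p.2))‖ ^ 2 ≤ (∑ a ∈ A, h (x * a)) ^ 2 := by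
        gcongr
        rw [sum_product]
        simpa only [h, mul_assoc] using norm_sum_le _ _
    _ ≤ #A * ∑ a ∈ A, h (x * a) ^ 2 := sq_sum_le_card_mul_sum_sq
    _ ≤ #A * ∑ y, h y ^ 2 := by
        gcongr
        rw [← (mulLeft_bijective₀ x hx).sum_comp (fun y => h y ^ 2)]
        exact sum_le_univ_sum_of_nonneg fun _ => sq_nonneg _
    _ = Fintype.card F * #A ^ 2 := by
        rw [sum_norm_sq_sum_mul hψ]
        ring

end AddChar

namespace Finset

variable {M : Type*} [MonoidWithZero M] [IsLeftCancelMulZero M] [DecidableEq M]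

lemma card_filter_eq_mul_le_card_erase (A : Finset M) {m : M} (hm : m ≠ 0) :
    #{p ∈ A ×ˢ A | m = p.1 * p.2} ≤ #(A.erase 0) := by
  refine card_le_card_of_injOn Prod.fst (fun p hp => ?_) fun p hp p' hp' h => ?_
  · simp only [mem_coe, mem_filter, mem_product] at hp
    simp only [mem_coe, mem_erase]
    refine ⟨fun h0 => hm ?_, hp.1.1⟩
    rw [hp.2, h0, zero_mul]
  · simp only [mem_coe, mem_filter] at hp hp'
    have h0 : p.1 ≠ 0 := fun h0 => hm (by rw [hp.2, h0, zero_mul])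
    exact Prod.ext h (mul_left_cancel₀ h0 (by rw [← hp.2, h, ← hp'.2]))

lemma card_filter_mul_eq_zero_add_sq_le (A : Finset M) :
    #{p ∈ A ×ˢ A | p.1 * p.2 = 0} + #(A.erase 0) ^ 2 ≤ #A ^ 2 := by
  have hdisj : Disjoint {p ∈ A ×ˢ A | p.1 * p.2 = 0} (A.erase 0 ×ˢ A.erase 0) := by
    refine disjoint_left.2 fun p hp hp' => ?_
    simp only [mem_filter, mem_product, mem_erase] at hp hp'
    exact mul_ne_zero hp'.1.1 hp'.2.1 hp.2
  rw [sq, sq, ← card_product, ← card_product, ← card_union_of_disjoint hdisj]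
  exact card_le_card <| union_subset (filter_subset _ _) <|
    product_subset_product (erase_subset _ _) (erase_subset _ _)

/-- When `0 ∈ A`, the `2|A| - 1` pairs with product zero are compensated by the fibres over
nonzero products having size at most `|A| - 1`. -/
lemma mulEnergy_self_le (A : Finset M) : Eₘ[A] ≤ #A ^ 3 + #A ^ 2 := by
  set P := A ×ˢ A
  set r₀ := #{p ∈ P | p.1 * p.2 = 0}
  set n' := #(A.erase 0)
  have hfiber (p : M × M) : #{p' ∈ P | p.1 * p.2 = p'.1 * p'.2} ≤
      if p.1 * p.2 = 0 then r₀ else n' := by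
    split_ifs with hp
    · simp only [hp, eq_comm, r₀, le_refl]
    · exact card_filter_eq_mul_le_card_erase A hp
  have hE : Eₘ[A] ≤ r₀ * r₀ + #{p ∈ P | p.1 * p.2 ≠ 0} * n' :=
    calc Eₘ[A] = ∑ p ∈ P, #{p' ∈ P | p.1 * p.2 = p'.1 * p'.2} := by
          rw [mulEnergy_eq_card_filter, card_filter, sum_product]
          simp only [card_filter, P]
      _ ≤ ∑ p ∈ P, if p.1 * p.2 = 0 then r₀ else n' := sum_le_sum fun p _ => hfiber p
      _ = r₀ * r₀ + #{p ∈ P | p.1 * p.2 ≠ 0} * n' := by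
          rw [sum_ite, sum_const, sum_const, smul_eq_mul, smul_eq_mul]
  have hsplit : r₀ + #{p ∈ P | p.1 * p.2 ≠ 0} = #A ^ 2 := by
    rw [card_filter_add_card_filter_not, card_product, sq]
  have hzero : r₀ + n' ^ 2 ≤ #A ^ 2 := card_filter_mul_eq_zero_add_sq_le A
  have hn' : #A ≤ n' + 1 := by have := pred_card_le_card_erase (s := A) (a := 0); omega
  have hn'A : n' ≤ #A := card_erase_le
  rcases Nat.eq_zero_or_pos r₀ with h0 | h0
  · rw [h0] at hsplit hE
    nlinarith
  · have hA : #A = n' + 1 := by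
      by_contra hne
      rw [show #A = n' by omega] at hzero
      omega
    rw [hA] at hsplit hzero ⊢
    have hr₀ : r₀ ≤ 2 * n' + 1 := by nlinarith
    nlinarith [Nat.mul_le_mul_left r₀ hr₀, Nat.mul_le_mul_right (n' + 1) hr₀]

end Finset

section SumProduct

variable {F : Type*} [Field F] [Fintype F] [DecidableEq F]

theorem card_pow_four_mul_card_sq_le (A T : Finset F) (hT : Disjoint T (A * A + A * A)) :
    ((#A : ℝ) ^ 4 * #T) ^ 2 ≤ (Fintype.card F * Eₘ[A] - #A ^ 4) *
      (Fintype.card F * #A ^ 2 * (Fintype.card F * #T - #T ^ 2)) := by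
  set ψ := AddChar.FiniteField.primitiveChar_to_Complex F
  have hψ : ψ.IsPrimitive := AddChar.FiniteField.primitiveChar_to_Complex_isPrimitive F
  set f : F → ℂ := fun x => ∑ p ∈ A ×ˢ A, ψ (x * (p.1 * p.2))
  set g : F → ℂ := fun x => ∑ t ∈ T, ψ (x * t)
  have hf : ∑ x ∈ univ.erase 0, ‖f x‖ ^ 2 = Fintype.card F * Eₘ[A] - #A ^ 4 := by
    rw [AddChar.sum_erase_zero_norm_sq_sum, AddChar.sum_norm_sq_sum_mulShift hψ,
      mulEnergy_eq_card_filter, card_product]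
    push_cast
    ring
  have hg : ∑ x ∈ univ.erase 0, ‖g x‖ ^ 2 = Fintype.card F * #T - #T ^ 2 := by
    simpa only [id, AddChar.sum_norm_sq_sum_mul hψ] using
      AddChar.sum_erase_zero_norm_sq_sum (ψ := ψ) T id
  have hvanish : ∑ x, f x ^ 2 * conj (g x) = 0 :=
    AddChar.sum_sq_mul_conj_eq_zero hψ _ _ _ id fun p hp p' hp' t ht h => by
      rw [mem_product] at hp hp'
      rw [id_eq] at h
      refine disjoint_left.1 hT ht ?_
      rw [← h]
      exact add_mem_add (mul_mem_mul hp.1 hp.2) (mul_mem_mul hp'.1 hp'.2)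
  have hnonzero : ∑ x ∈ univ.erase 0, f x ^ 2 * conj (g x) = -((#A : ℂ) ^ 4 * #T) := by
    have hf0 : f 0 = (#A : ℂ) ^ 2 := by simp [f, sq]
    have hg0 : g 0 = #T := by simp [g]
    rw [← add_sum_erase _ _ (mem_univ 0), hf0, hg0, map_natCast] at hvanish
    linear_combination hvanish
  calc ((#A : ℝ) ^ 4 * #T) ^ 2 = ‖∑ x ∈ univ.erase 0, f x ^ 2 * conj (g x)‖ ^ 2 := by
        rw [hnonzero, norm_neg]
        norm_cast
    _ ≤ (∑ x ∈ univ.erase 0, ‖f x‖ * (‖f x‖ * ‖g x‖)) ^ 2 := by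
        gcongr
        refine (norm_sum_le _ _).trans_eq (sum_congr rfl fun x _ => ?_)
        rw [norm_mul, norm_pow, RCLike.norm_conj]
        ring
    _ ≤ (∑ x ∈ univ.erase 0, ‖f x‖ ^ 2) * ∑ x ∈ univ.erase 0, (‖f x‖ * ‖g x‖) ^ 2 :=
        sum_mul_sq_le_sq_mul_sq _ _ _
    _ ≤ (∑ x ∈ univ.erase 0, ‖f x‖ ^ 2) *
          (Fintype.card F * #A ^ 2 * ∑ x ∈ univ.erase 0, ‖g x‖ ^ 2) := by
        gcongr
        rw [mul_sum]
        refine sum_le_sum fun x hx => ?_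
        rw [mul_pow]
        gcongr
        exact AddChar.norm_sum_mul_mul_sq_le hψ A (ne_of_mem_erase hx)
    _ = _ := by rw [hf, hg]

theorem card_mul_card_pow_three_add_sq_le (A T : Finset F) (hT : Disjoint T (A * A + A * A))
    (hA : (Fintype.card F : ℝ) ^ 2 ≤ #A ^ 3) :
    (#T : ℝ) * (#A ^ 3 + Fintype.card F ^ 2) ≤ Fintype.card F ^ 3 := by
  have hfourier := card_pow_four_mul_card_sq_le A T hT
  have hE : (Eₘ[A] : ℝ) ≤ #A ^ 3 + #A ^ 2 := by exact_mod_cast mulEnergy_self_le A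
  have htq : (#T : ℝ) ≤ Fintype.card F := by exact_mod_cast card_le_univ T
  have hq : (1 : ℝ) ≤ Fintype.card F := Nat.one_le_cast.2 Fintype.card_pos
  set q : ℝ := (Fintype.card F : ℝ)
  set N : ℝ := (#A : ℝ)
  set t : ℝ := (#T : ℝ)
  have ht : 0 ≤ t := Nat.cast_nonneg _
  have hqN : q ≤ N ^ 2 := by
    by_contra! h
    have h6 : (N ^ 2) ^ 3 < q ^ 3 := pow_lt_pow_left₀ h (by positivity) three_ne_zero
    nlinarith [pow_le_pow_left₀ (by positivity) hA 2]
  have hN : 0 < N := by nlinarith [(Nat.cast_nonneg #A : (0 : ℝ) ≤ N)]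
  have hkey : (N ^ 4 * t) ^ 2 ≤ (q * N ^ 3) * (q * N ^ 2 * (q * t - t ^ 2)) := by
    refine hfourier.trans ?_
    gcongr
    · exact mul_nonneg (by positivity) (by nlinarith)
    · nlinarith
  rcases ht.eq_or_lt with h0 | h0
  · rw [← h0, zero_mul]
    positivity
  · have hcancel : N ^ 3 * t ≤ q ^ 2 * (q - t) :=
      le_of_mul_le_mul_left (a := N ^ 5 * t) (by nlinarith) (by positivity)
    linear_combination hcancel

end SumProduct

lemma rpow_three_halves_mul_sq_le_pow_three {C Q N : ℝ} (hC : 0 ≤ C) (hQ : 0 ≤ Q)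
    (h : C ^ ((1 : ℝ) / 2) * Q ^ ((2 : ℝ) / 3) ≤ N) : C ^ ((3 : ℝ) / 2) * Q ^ 2 ≤ N ^ 3 :=
  calc C ^ ((3 : ℝ) / 2) * Q ^ 2 = (C ^ ((1 : ℝ) / 2) * Q ^ ((2 : ℝ) / 3)) ^ 3 := by
        rw [mul_pow, ← Real.rpow_natCast (C ^ _), ← Real.rpow_natCast (Q ^ _),
          ← Real.rpow_mul hC, ← Real.rpow_mul hQ]
        norm_num
    _ ≤ N ^ 3 := by gcongr

/-- If `A ⊆ F_q` with `|A| ≥ C^(1/2) · q^(2/3)` where `C ≥ 1`, then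
`|A² + A²| ≥ q · C^(3/2) / (C^(3/2) + 1)`. -/
theorem stmt_3 {F : Type*} [Field F] [Fintype F] (C : ℝ) (hC : 1 ≤ C)
    (A : Finset F)
    (hA : (A.card : ℝ) ≥ C ^ ((1 : ℝ) / 2) * (Fintype.card F : ℝ) ^ ((2 : ℝ) / 3)) :
    (Set.ncard {t : F | ∃ a ∈ A, ∃ b ∈ A, ∃ c ∈ A, ∃ e ∈ A, t = a * b + c * e} : ℝ) ≥
      (Fintype.card F : ℝ) * C ^ ((3 : ℝ) / 2) / (C ^ ((3 : ℝ) / 2) + 1) := by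
  classical
  have hS : {t : F | ∃ a ∈ A, ∃ b ∈ A, ∃ c ∈ A, ∃ e ∈ A, t = a * b + c * e} =
      ↑(A * A + A * A) := by
    ext t
    simp only [Set.mem_ofPred_eq, coe_add, coe_mul, Set.mem_add, Set.mem_mul, mem_coe]
    constructor
    · rintro ⟨a, ha, b, hb, c, hc, e, he, rfl⟩
      exact ⟨_, ⟨a, ha, b, hb, rfl⟩, _, ⟨c, hc, e, he, rfl⟩, rfl⟩
    · rintro ⟨_, ⟨a, ha, b, hb, rfl⟩, _, ⟨c, hc, e, he, rfl⟩, rfl⟩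
      exact ⟨a, ha, b, hb, c, hc, e, he, rfl⟩
  set q : ℝ := (Fintype.card F : ℝ)
  set k : ℝ := C ^ ((3 : ℝ) / 2)
  have hq : 0 < q := Nat.cast_pos.2 Fintype.card_pos
  have hk : 1 ≤ k := Real.one_le_rpow hC (by norm_num)
  have hcube : k * q ^ 2 ≤ #A ^ 3 := rpow_three_halves_mul_sq_le_pow_three (by linarith) hq.le hA
  have hcompl := card_mul_card_pow_three_add_sq_le A _ disjoint_compl_left (by nlinarith)
  have hTk : (#(A * A + A * A)ᶜ : ℝ) * (k + 1) ≤ q :=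
    le_of_mul_le_mul_right (by nlinarith) (by positivity : 0 < q ^ 2)
  rw [card_compl, Nat.cast_sub (card_le_univ _)] at hTk
  rw [hS, Set.ncard_coe_finset, ge_iff_le, div_le_iff₀ (by positivity)]
  nlinarith
end

section
/- Let q be a prime power, F_q the finite field with q elements, and d a positive integer. Let E ⊆ F_q^d satisfy |E| > q^((d+1)/2). Then every nonzero element t of F_q can be written as t = x·y for some x, y ∈ E, i.e., F_q \ {0} ⊆ {x·y : x, y ∈ E}. -/
/-!
Suppose no two points of `E` have dot product `t ≠ 0`, and let `g x = #{y ∈ E | x ⬝ᵥ y = t}`.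
Then `q * g - #E` equals `-#E` on `E`, so its squared `ℓ²`-norm is at least `#E ^ 3`.
For a primitive additive character `ψ`, `q * g x - #E = ∑ y ∈ E, ∑ s ≠ 0, ψ (s * (x ⬝ᵥ y - t))`,
and orthogonality of the characters `x ↦ ψ (x ⬝ᵥ v)` turns that squared norm into
`q ^ d * ∑ y, y' ∈ E, (q * [y = y'] - #{l ≠ 0 | y = l • y'})`, which is at most `q ^ (d + 1) * #E`.
Hence `#E ^ 2 ≤ q ^ (d + 1)`.
-/

open Finset

section

variable {F : Type*} [Field F] [Fintype F] [DecidableEq F] {ι : Type*} [Fintype ι]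

namespace AddChar

lemma map_sum_eq_prod_s6 {A M : Type*} [AddCommMonoid A] [CommMonoid M] (ψ : AddChar A M)
    {J : Type*} (s : Finset J) (f : J → A) : ψ (∑ j ∈ s, f j) = ∏ j ∈ s, ψ (f j) := by
  classical
  induction s using Finset.induction with
  | empty => simp
  | insert j s hj ih => rw [sum_insert hj, prod_insert hj, map_add_eq_mul, ih]

variable {ψ : AddChar F ℂ}

lemma sum_units_mulShift (hψ : ψ.IsPrimitive) (a : F) :
    ∑ s : Fˣ, ψ (s * a) = Fintype.card F * (if a = 0 then 1 else 0) - 1 := by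
  have hsplit := Fintype.sum_eq_add_sum_subtype_ne (fun x : F ↦ ψ (x * a)) 0
  rw [sum_mulShift a hψ, zero_mul, map_zero_eq_one,
    ← Fintype.sum_equiv unitsEquivNeZero (fun s : Fˣ ↦ ψ (s * a)) _ fun _ ↦ rfl] at hsplit
  split_ifs at hsplit ⊢ <;> linear_combination -hsplit

lemma sum_sum_units_mulShift_dotProduct_sub (hψ : ψ.IsPrimitive) (E : Finset (ι → F))
    (x : ι → F) (t : F) :
    ∑ y ∈ E, ∑ s : Fˣ, ψ (s * (x ⬝ᵥ y - t)) = Fintype.card F * #{y ∈ E | x ⬝ᵥ y = t} - #E := by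
  simp_rw [sum_units_mulShift hψ, sub_eq_zero, sum_sub_distrib, ← mul_sum, sum_boole]
  simp

/-- Substituting `s' = s * l`, the inner sum over `s` vanishes unless `l = 1`, since `t ≠ 0`. -/
lemma sum_units_sum_units_ite_smul_eq_smul (hψ : ψ.IsPrimitive) {t : F} (ht : t ≠ 0)
    (y y' : ι → F) :
    ∑ s : Fˣ, ∑ s' : Fˣ, (if s • y = s' • y' then ψ (-(s * t)) * ψ (s' * t) else 0) =
      Fintype.card F * (if y = y' then 1 else 0) - #{l : Fˣ | y = l • y'} := by
  calc _ = ∑ s : Fˣ, ∑ l : Fˣ, if y = l • y' then ψ (s * (t * (l - 1))) else 0 := by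
        refine sum_congr rfl fun s _ ↦ ?_
        rw [← Equiv.sum_comp (Equiv.mulLeft s)]
        refine sum_congr rfl fun l _ ↦ ?_
        simp only [Equiv.coe_mulLeft, mul_smul, smul_left_cancel_iff, ← map_add_eq_mul]
        split_ifs
        · congr 1; push_cast; ring
        · rfl
    _ = ∑ l : Fˣ, ((if l = 1 then if y = l • y' then (Fintype.card F : ℂ) else 0 else 0) -
          if y = l • y' then 1 else 0) := by
        rw [sum_comm]
        refine sum_congr rfl fun l _ ↦ ?_
        rw [sum_ite_irrel, sum_const_zero, sum_units_mulShift hψ]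
        simp only [mul_eq_zero, ht, false_or, sub_eq_zero, Units.val_eq_one]
        split_ifs <;> ring
    _ = _ := by
        rw [sum_sub_distrib, sum_ite_eq', one_smul, sum_boole]
        simp

variable [DecidableEq ι]

lemma sum_dotProduct (hψ : ψ.IsPrimitive) (v : ι → F) :
    ∑ x : ι → F, ψ (x ⬝ᵥ v) = if v = 0 then (Fintype.card F : ℂ) ^ Fintype.card ι else 0 := by
  calc ∑ x : ι → F, ψ (x ⬝ᵥ v) = ∏ i, ∑ s : F, ψ (s * v i) := by
        rw [Fintype.prod_sum]; simp only [dotProduct, ψ.map_sum_eq_prod_s6]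
    _ = _ := by
        simp only [sum_mulShift _ hψ, apply_ite (Nat.cast : ℕ → ℂ), Nat.cast_zero,
          Fintype.prod_ite_zero, prod_const, card_univ, funext_iff, Pi.zero_apply]

lemma sum_mul_sum_dotProduct (hψ : ψ.IsPrimitive) {J : Type*} (s : Finset J) (c c' : J → ℂ)
    (v : J → ι → F) :
    ∑ x : ι → F, (∑ j ∈ s, c j * ψ (x ⬝ᵥ v j)) * ∑ k ∈ s, c' k * ψ (-(x ⬝ᵥ v k)) =
      Fintype.card F ^ Fintype.card ι * ∑ j ∈ s, ∑ k ∈ s, if v j = v k then c j * c' k else 0 := by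
  calc _ = ∑ j ∈ s, ∑ k ∈ s, c j * c' k * ∑ x : ι → F, ψ (x ⬝ᵥ (v j - v k)) := by
        simp_rw [sum_mul_sum, mul_sum]
        rw [sum_comm]
        refine sum_congr rfl fun j _ ↦ ?_
        rw [sum_comm]
        refine sum_congr rfl fun k _ ↦ sum_congr rfl fun x _ ↦ ?_
        rw [dotProduct_sub, sub_eq_add_neg, map_add_eq_mul]
        ring
    _ = _ := by
        simp_rw [sum_dotProduct hψ, sub_eq_zero, mul_sum]
        refine sum_congr rfl fun j _ ↦ sum_congr rfl fun k _ ↦ ?_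
        split_ifs <;> ring

end AddChar

variable [DecidableEq ι]

theorem sum_sq_card_filter_dotProduct_eq {t : F} (ht : t ≠ 0) (E : Finset (ι → F)) :
    ∑ x : ι → F, ((Fintype.card F : ℤ) * #{y ∈ E | x ⬝ᵥ y = t} - #E) ^ 2 =
      Fintype.card F ^ Fintype.card ι * ∑ y ∈ E, ∑ y' ∈ E,
        ((Fintype.card F : ℤ) * (if y = y' then 1 else 0) - #{l : Fˣ | y = l • y'}) := by
  set ψ := AddChar.FiniteField.primitiveChar_to_Complex F
  have hψ : ψ.IsPrimitive := AddChar.FiniteField.primitiveChar_to_Complex_isPrimitive F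
  have hD : ∀ x, ∑ j ∈ E ×ˢ (univ : Finset Fˣ), ψ (-(j.2 * t)) * ψ (x ⬝ᵥ (j.2 • j.1)) =
      Fintype.card F * #{y ∈ E | x ⬝ᵥ y = t} - #E := by
    intro x
    rw [← AddChar.sum_sum_units_mulShift_dotProduct_sub hψ, sum_product]
    refine sum_congr rfl fun y _ ↦ sum_congr rfl fun s _ ↦ ?_
    rw [← AddChar.map_add_eq_mul, dotProduct_smul, Units.smul_def, smul_eq_mul]
    ring_nf
  have hD' : ∀ x, ∑ j ∈ E ×ˢ (univ : Finset Fˣ), ψ (j.2 * t) * ψ (-(x ⬝ᵥ (j.2 • j.1))) =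
      Fintype.card F * #{y ∈ E | x ⬝ᵥ y = t} - #E := by
    intro x
    rw [← AddChar.sum_sum_units_mulShift_dotProduct_sub hψ, sum_product]
    refine sum_congr rfl fun y _ ↦ ?_
    rw [← Equiv.sum_comp (Equiv.neg Fˣ)]
    refine sum_congr rfl fun s _ ↦ ?_
    rw [← AddChar.map_add_eq_mul, Equiv.neg_apply, dotProduct_smul, Units.smul_def, smul_eq_mul,
      Units.val_neg]
    ring_nf
  apply Int.cast_injective (α := ℂ)
  push_cast
  calc _ = ∑ x : ι → F, (∑ j ∈ E ×ˢ (univ : Finset Fˣ), ψ (-(j.2 * t)) * ψ (x ⬝ᵥ (j.2 • j.1))) *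
        ∑ k ∈ E ×ˢ (univ : Finset Fˣ), ψ (k.2 * t) * ψ (-(x ⬝ᵥ (k.2 • k.1))) := by simp only [hD, hD', sq]
    _ = _ := by
      rw [AddChar.sum_mul_sum_dotProduct hψ]
      congr 1
      simp_rw [sum_product (s := E)]
      refine sum_congr rfl fun y _ ↦ ?_
      rw [sum_comm]
      exact sum_congr rfl fun y' _ ↦ AddChar.sum_units_sum_units_ite_smul_eq_smul hψ ht y y'

theorem card_sq_le_of_forall_dotProduct_ne {t : F} (ht : t ≠ 0) {E : Finset (ι → F)}
    (hE : ∀ x ∈ E, ∀ y ∈ E, x ⬝ᵥ y ≠ t) : #E ^ 2 ≤ Fintype.card F ^ (Fintype.card ι + 1) := by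
  have hcube : (#E : ℤ) ^ 3 ≤ Fintype.card F ^ (Fintype.card ι + 1) * #E := calc
    (#E : ℤ) ^ 3 = ∑ x ∈ E, ((Fintype.card F : ℤ) * #{y ∈ E | x ⬝ᵥ y = t} - #E) ^ 2 := by
      rw [sum_congr rfl fun x hx ↦ by rw [filter_false_of_mem (hE x hx)]]
      simp only [card_empty, Nat.cast_zero, mul_zero, zero_sub, even_two, Even.neg_pow,
        sum_const, nsmul_eq_mul]
      ring
    _ ≤ ∑ x : ι → F, ((Fintype.card F : ℤ) * #{y ∈ E | x ⬝ᵥ y = t} - #E) ^ 2 :=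
      sum_le_univ_sum_of_nonneg fun _ ↦ sq_nonneg _
    _ = Fintype.card F ^ Fintype.card ι * ∑ y ∈ E, ∑ y' ∈ E,
          ((Fintype.card F : ℤ) * (if y = y' then 1 else 0) - #{l : Fˣ | y = l • y'}) :=
      sum_sq_card_filter_dotProduct_eq ht E
    _ ≤ Fintype.card F ^ Fintype.card ι * ∑ y ∈ E, ∑ y' ∈ E,
          (Fintype.card F : ℤ) * (if y = y' then 1 else 0) := by
      gcongr
      exact sub_le_self _ (Nat.cast_nonneg _)
    _ = Fintype.card F ^ (Fintype.card ι + 1) * #E := by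
      rw [sum_congr rfl fun y hy ↦ by rw [← mul_sum, sum_boole, filter_eq, if_pos hy]]
      simp only [card_singleton, Nat.cast_one, mul_one, sum_const, nsmul_eq_mul]
      ring
  have hsq : (#E : ℤ) ^ 2 ≤ Fintype.card F ^ (Fintype.card ι + 1) := by
    rcases (#E).eq_zero_or_pos with h | h
    · simp [h]
    · exact le_of_mul_le_mul_right (by linarith) (by exact_mod_cast h : (0 : ℤ) < #E)
  exact_mod_cast hsq

end

theorem stmt_6_general {F : Type*} [Field F] [Fintype F] (d : ℕ)
    (E : Finset (Fin d → F))
    (hE : (E.card : ℝ) > (Fintype.card F : ℝ) ^ (((d : ℝ) + 1) / 2)) :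
    ∀ t : F, t ≠ 0 → ∃ x ∈ E, ∃ y ∈ E, t = ∑ i, x i * y i := by
  classical
  intro t ht
  by_contra! h
  have hsq := card_sq_le_of_forall_dotProduct_ne ht fun x hx y hy ↦ (h x hx y hy).symm
  rw [Fintype.card_fin] at hsq
  have hlt := pow_lt_pow_left₀ hE (by positivity) two_ne_zero
  rw [← Real.rpow_mul_natCast (Nat.cast_nonneg _),
    show ((d : ℝ) + 1) / 2 * (2 : ℕ) = (d + 1 : ℕ) by push_cast; ring, Real.rpow_natCast] at hlt
  exact hlt.not_ge (by exact_mod_cast hsq)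

/-- If `E ⊆ F_q^d` with `|E| > q^((d+1)/2)`, then every nonzero `t ∈ F_q` is a dot
product of two elements of `E`. -/
theorem stmt_6 {F : Type*} [Field F] [Fintype F] (d : ℕ) (hd : 0 < d)
    (E : Finset (Fin d → F))
    (hE : (E.card : ℝ) > (Fintype.card F : ℝ) ^ (((d : ℝ) + 1) / 2)) :
    ∀ t : F, t ≠ 0 → ∃ x ∈ E, ∃ y ∈ E, t = ∑ i, x i * y i :=
  stmt_6_general d E hE
end

section
/- Let q be a prime power, F_q the finite field with q elements, d a positive integer, and let C_geom > 0, C_size > 0 and 0 ≤ α ≤ d be real numbers. Let E ⊆ F_q^d be such that |E ∩ l_y| ≤ C_geom · q^(α/d) for every y ∈ F_q^d with y ≠ 0, where l_y = {t·y : t ∈ F_q}. If |E| ≥ C_size · q^(d/2 + α/(2d)), then |{x·y : x, y ∈ E}| ≥ q · C_size² / (C_size² + C_geom). -/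
/-!
Let `Π(E, E') = {x ⬝ y : x ∈ E, y ∈ E'}` and let `ν(t)` count the pairs of `E × E'` with dot
product `t`, so that `(|E| |E'|)² ≤ |Π(E, E')| · Σ ν(t)²` by Cauchy–Schwarz. For a primitive
additive character `ψ` of `F_q`, `q · Σ ν(t)² = Σ_s |Σ_{y ∈ E'} T(s y)|²` with
`T(z) = Σ_{x ∈ E} ψ(x ⬝ z)`. The term `s = 0` is `(|E| |E'|)²`. For `s ≠ 0` Cauchy–Schwarz in `y`
and the fact that a nonzero `z` is of the form `s y` for at most `|E' ∩ l_z|` pairs bound the rest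
by `|E'| · max_z |E' ∩ l_z| · Σ_{z ≠ 0} |T(z)|²`, and Plancherel gives
`Σ_{z ≠ 0} |T(z)|² = q^d |E| - |E|²`. With `E' = E \ {0}` this yields
`q |E|² ≤ |Π(E, E)| (|E|² + C q^d)` whenever `C` bounds `|E ∩ l_z|`; the loss caused by removing
`0` is covered by the trivial bound `q |E| ≤ |Π(E, E)| q^d`, as the level sets of `y ↦ x ⬝ y` are
hyperplanes. The size hypothesis on `E` says exactly that `C_size² C q^d ≤ C_geom |E|²`.
-/

open Finset ComplexConjugate

namespace AddChar

variable {G α : Type*} [AddCommGroup G] [Fintype G]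

open Classical in
theorem sum_mul_conj (χ₁ χ₂ : AddChar G ℂ) :
    ∑ z, χ₁ z * conj (χ₂ z) = if χ₁ = χ₂ then (Fintype.card G : ℂ) else 0 := by
  have h : ∀ z, χ₁ z * conj (χ₂ z) = (χ₁ * χ₂⁻¹) z := fun z => by
    rw [mul_apply, inv_apply', inv_apply_eq_conj]
  simp_rw [h, sum_eq_ite, ← one_eq_zero, mul_inv_eq_one]

open Classical in
theorem sum_norm_sq_sum (X : Finset α) (χ : α → AddChar G ℂ) :
    ∑ z, ‖∑ a ∈ X, χ a z‖ ^ 2 = Fintype.card G * #{p ∈ X ×ˢ X | χ p.1 = χ p.2} := by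
  apply Complex.ofReal_injective
  push_cast
  simp_rw [← Complex.mul_conj', map_sum, sum_mul_sum]
  rw [sum_comm]
  simp_rw [sum_comm (s := (univ : Finset G))]
  rw [← sum_product']
  simp_rw [sum_mul_conj, sum_ite, sum_const_zero, add_zero, sum_const, nsmul_eq_mul, mul_comm]

theorem exists_isPrimitive_s7 {F : Type*} [Field F] [Finite F] :
    ∃ ψ : AddChar F ℂ, ψ.IsPrimitive := by
  obtain ⟨ψ, hψ⟩ := (exists_apply_ne_zero (a := (1 : F))).2 one_ne_zero
  exact ⟨ψ, IsPrimitive.of_ne_one (ne_one_iff.2 ⟨1, hψ⟩)⟩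

end AddChar

theorem card_sq_le_card_image_mul_card_collisions {α β : Type*} [DecidableEq β]
    (X : Finset α) (f : α → β) :
    #X ^ 2 ≤ #(X.image f) * #{p ∈ X ×ˢ X | f p.1 = f p.2} := by
  have hfiber : ∀ b, {p ∈ X ×ˢ X | f p.1 = f p.2 ∧ f p.1 = b} =
      {a ∈ X | f a = b} ×ˢ {a ∈ X | f a = b} := fun b => by
    ext p
    simp only [mem_filter, mem_product]
    constructor
    · rintro ⟨⟨h1, h2⟩, he, rfl⟩
      exact ⟨⟨h1, rfl⟩, h2, he.symm⟩
    · rintro ⟨⟨h1, rfl⟩, h2, he⟩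
      exact ⟨⟨h1, h2⟩, he.symm, rfl⟩
  have hcoll : #{p ∈ X ×ˢ X | f p.1 = f p.2} = ∑ b ∈ X.image f, #{a ∈ X | f a = b} ^ 2 := by
    rw [card_eq_sum_card_fiberwise (f := fun p => f p.1) (t := X.image f)
      fun p hp => mem_image_of_mem f (mem_product.1 (mem_filter.1 hp).1).1]
    simp_rw [filter_filter, hfiber, card_product, sq]
  rw [hcoll, card_eq_sum_card_image f X]
  exact sq_sum_le_card_mul_sum_sq

section VectorSpace

variable {F V : Type*} [Field F] [Fintype F] [DecidableEq F] [AddCommGroup V] [Module F V]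
  [Fintype V]

theorem image_smul_erase_zero [DecidableEq V] {y : V} (hy : y ≠ 0) :
    (univ.erase (0 : F)).image (fun s : F => s • y) =
      {z ∈ univ.erase (0 : V) | ∃ t : F, y = t • z} := by
  ext z
  simp only [mem_image, mem_filter, mem_erase, mem_univ, and_true]
  constructor
  · rintro ⟨s, hs, rfl⟩
    exact ⟨smul_ne_zero hs hy, s⁻¹, by rw [smul_smul, inv_mul_cancel₀ hs, one_smul]⟩
  · rintro ⟨hz, t, rfl⟩
    have ht : t ≠ 0 := left_ne_zero_of_smul hy
    exact ⟨t⁻¹, inv_ne_zero ht, by rw [smul_smul, inv_mul_cancel₀ ht, one_smul]⟩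

theorem sum_sum_smul_le_mul_sum [DecidableEq V] {h : V → ℝ} (hh : ∀ z, 0 ≤ h z)
    {E : Finset V} (hE : (0 : V) ∉ E) {μ : ℝ}
    (hμ : ∀ z ≠ 0, (#{y ∈ E | ∃ t : F, y = t • z} : ℝ) ≤ μ) :
    ∑ s ∈ univ.erase (0 : F), ∑ y ∈ E, h (s • y) ≤ μ * ∑ z ∈ univ.erase 0, h z := by
  have hline : ∀ y ∈ E, ∑ s ∈ univ.erase (0 : F), h (s • y) =
      ∑ z ∈ {z ∈ univ.erase (0 : V) | ∃ t : F, y = t • z}, h z := fun y hy => by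
    have hy0 : y ≠ 0 := ne_of_mem_of_not_mem hy hE
    rw [← image_smul_erase_zero hy0, sum_image fun s _ t _ hst => smul_left_injective F hy0 hst]
  rw [sum_comm, sum_congr rfl hline, sum_comm' (t' := univ.erase 0)
    (s' := fun z => {y ∈ E | ∃ t : F, y = t • z}) (fun y z => by simp only [mem_filter]; tauto),
    mul_sum]
  refine sum_le_sum fun z hz => ?_
  rw [sum_const, nsmul_eq_mul]
  exact mul_le_mul_of_nonneg_right (hμ z (ne_of_mem_erase hz)) (hh z)

theorem card_mul_card_le_card_image_mul_card {f : V →ₗ[F] F} (hf : f ≠ 0) (E : Finset V) :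
    #E * Fintype.card F ≤ #(E.image f) * Fintype.card V := by
  set n := #{v | f v = 0}
  have hfiber : ∀ t, #{v | f v = t} = n := fun t =>
    AddMonoidHom.card_fiber_eq_of_mem_range f (LinearMap.surjective_of_ne_zero hf t)
      (LinearMap.surjective_of_ne_zero hf 0)
  have hcardV : Fintype.card V = Fintype.card F * n := by
    rw [← card_univ, card_eq_sum_card_fiberwise (f := f) (t := univ) fun _ _ => mem_univ _]
    simp_rw [hfiber, sum_const, card_univ, smul_eq_mul]
  have hE : #E ≤ n * #(E.image f) := card_le_mul_card_image E n fun t _ =>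
    (card_le_card (filter_subset_filter _ (subset_univ E))).trans (hfiber t).le
  calc #E * Fintype.card F ≤ n * #(E.image f) * Fintype.card F := Nat.mul_le_mul_right _ hE
    _ = #(E.image f) * Fintype.card V := by rw [hcardV]; ring

end VectorSpace

section DotProduct

variable {F ι α : Type*} [Field F] [Fintype ι]

def AddChar.compDotProduct (ψ : AddChar F ℂ) (x : ι → F) : AddChar (ι → F) ℂ :=
  ψ.compAddMonoidHom (AddMonoidHom.mk' (x ⬝ᵥ ·) (dotProduct_add x))

@[simp]
theorem AddChar.compDotProduct_apply (ψ : AddChar F ℂ) (x z : ι → F) :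
    ψ.compDotProduct x z = ψ (x ⬝ᵥ z) := rfl

theorem AddChar.IsPrimitive.compDotProduct_injective {ψ : AddChar F ℂ} (hψ : ψ.IsPrimitive) :
    Function.Injective (ψ.compDotProduct (ι := ι)) := by
  classical
  intro x y hxy
  funext i
  apply AddChar.to_mulShift_inj_of_isPrimitive hψ
  ext a
  simpa [dotProduct_single] using DFunLike.congr_fun hxy (Pi.single i a)

def dotProducts [DecidableEq F] (E E' : Finset (ι → F)) : Finset F :=
  (E ×ˢ E').image fun p => p.1 ⬝ᵥ p.2

variable [Fintype F] [DecidableEq F] [DecidableEq ι] {ψ : AddChar F ℂ}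

theorem sum_norm_sq_sum_addChar_dotProduct (hψ : ψ.IsPrimitive) (E : Finset (ι → F)) :
    ∑ z, ‖∑ x ∈ E, ψ (x ⬝ᵥ z)‖ ^ 2 = Fintype.card (ι → F) * #E := by
  have h := AddChar.sum_norm_sq_sum E ψ.compDotProduct
  simp only [AddChar.compDotProduct_apply, hψ.compDotProduct_injective.eq_iff] at h
  rw [h, ← diag_card E, diag_eq_filter]

theorem sum_norm_sq_sum_addChar_mul (hψ : ψ.IsPrimitive) (X : Finset α) (f : α → F) :
    ∑ s, ‖∑ a ∈ X, ψ (f a * s)‖ ^ 2 = Fintype.card F * #{p ∈ X ×ˢ X | f p.1 = f p.2} := by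
  have h := AddChar.sum_norm_sq_sum X fun a => ψ.mulShift (f a)
  simp only [AddChar.mulShift_apply, (AddChar.to_mulShift_inj_of_isPrimitive hψ).eq_iff] at h
  rw [h]

theorem card_mul_card_collisions_dotProduct_le (hψ : ψ.IsPrimitive) (E E' : Finset (ι → F))
    (hE' : (0 : ι → F) ∉ E') {μ : ℝ}
    (hμ : ∀ z ≠ 0, (#{y ∈ E' | ∃ t : F, y = t • z} : ℝ) ≤ μ) :
    (Fintype.card F : ℝ) * #{p ∈ (E ×ˢ E') ×ˢ (E ×ˢ E') | p.1.1 ⬝ᵥ p.1.2 = p.2.1 ⬝ᵥ p.2.2} ≤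
      ((#E : ℝ) * #E') ^ 2 + #E * #E' * μ * (Fintype.card (ι → F) - #E) := by
  set T : (ι → F) → ℂ := fun z => ∑ x ∈ E, ψ (x ⬝ᵥ z)
  have hS : ∀ s : F, ∑ p ∈ E ×ˢ E', ψ (p.1 ⬝ᵥ p.2 * s) = ∑ y ∈ E', T (s • y) := fun s => by
    rw [sum_product, sum_comm]
    simp [T, dotProduct_smul, mul_comm]
  have hT0 : ‖T 0‖ ^ 2 = (#E : ℝ) ^ 2 := by simp [T]
  have hPlancherel : ∑ z ∈ univ.erase (0 : ι → F), ‖T z‖ ^ 2 =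
      Fintype.card (ι → F) * #E - (#E : ℝ) ^ 2 := by
    rw [← sum_norm_sq_sum_addChar_dotProduct hψ E, ← add_sum_erase _ _ (mem_univ 0), hT0]
    ring
  have hCS : ∀ s : F, ‖∑ y ∈ E', T (s • y)‖ ^ 2 ≤ #E' * ∑ y ∈ E', ‖T (s • y)‖ ^ 2 := fun s =>
    (pow_le_pow_left₀ (norm_nonneg _) (norm_sum_le _ _) 2).trans sq_sum_le_card_mul_sum_sq
  rw [← sum_norm_sq_sum_addChar_mul hψ (E ×ˢ E') (fun p => p.1 ⬝ᵥ p.2),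
    ← add_sum_erase _ _ (mem_univ 0)]
  simp_rw [hS]
  calc ‖∑ y ∈ E', T ((0 : F) • y)‖ ^ 2 + ∑ s ∈ univ.erase (0 : F), ‖∑ y ∈ E', T (s • y)‖ ^ 2
      ≤ ((#E : ℝ) * #E') ^ 2 + #E' * ∑ s ∈ univ.erase (0 : F), ∑ y ∈ E', ‖T (s • y)‖ ^ 2 := by
        rw [mul_sum]
        gcongr with s
        · simp [T, mul_comm]
        · exact hCS s
    _ ≤ ((#E : ℝ) * #E') ^ 2 + #E' * (μ * ∑ z ∈ univ.erase (0 : ι → F), ‖T z‖ ^ 2) := by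
        gcongr
        exact sum_sum_smul_le_mul_sum (h := fun z => ‖T z‖ ^ 2) (fun z => by positivity) hE' hμ
    _ = _ := by rw [hPlancherel]; ring

theorem card_mul_sq_le_card_dotProducts_mul (E E' : Finset (ι → F)) (hE' : (0 : ι → F) ∉ E')
    {μ : ℝ} (hμ : ∀ z ≠ 0, (#{y ∈ E' | ∃ t : F, y = t • z} : ℝ) ≤ μ) :
    (Fintype.card F : ℝ) * ((#E : ℝ) * #E') ^ 2 ≤ #(dotProducts E E') *
      (((#E : ℝ) * #E') ^ 2 + #E * #E' * μ * (Fintype.card (ι → F) - #E)) := by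
  obtain ⟨ψ, hψ⟩ := AddChar.exists_isPrimitive_s7 (F := F)
  have hCS : ((#E : ℝ) * #E') ^ 2 ≤ #(dotProducts E E') *
      #{p ∈ (E ×ˢ E') ×ˢ (E ×ˢ E') | p.1.1 ⬝ᵥ p.1.2 = p.2.1 ⬝ᵥ p.2.2} := by
    exact_mod_cast card_product E E' ▸ card_sq_le_card_image_mul_card_collisions (E ×ˢ E') _
  calc (Fintype.card F : ℝ) * ((#E : ℝ) * #E') ^ 2
      ≤ #(dotProducts E E') * (Fintype.card F *
          #{p ∈ (E ×ˢ E') ×ˢ (E ×ˢ E') | p.1.1 ⬝ᵥ p.1.2 = p.2.1 ⬝ᵥ p.2.2}) := by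
        rw [mul_left_comm]
        gcongr
    _ ≤ _ := by
        gcongr
        exact card_mul_card_collisions_dotProduct_le hψ E E' hE' hμ

theorem card_mul_le_card_dotProducts_mul [Nonempty ι] (E : Finset (ι → F)) :
    #E * Fintype.card F ≤ #(dotProducts E E) * Fintype.card (ι → F) := by
  by_cases h : ∃ x ∈ E, x ≠ 0
  · obtain ⟨x, hx, hx0⟩ := h
    have hf : dotProductEquiv F ι x ≠ 0 :=
      (map_ne_zero_iff _ (dotProductEquiv F ι).injective).2 hx0
    refine (card_mul_card_le_card_image_mul_card hf E).trans (Nat.mul_le_mul_right _ ?_)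
    refine card_le_card fun t ht => ?_
    obtain ⟨y, hy, rfl⟩ := mem_image.1 ht
    exact mem_image.2 ⟨(x, y), mem_product.2 ⟨hx, hy⟩, rfl⟩
  · push Not at h
    rcases E.eq_empty_or_nonempty with rfl | hne
    · simp
    have hE1 : #E ≤ 1 := card_le_one.2 fun a ha b hb => by rw [h a ha, h b hb]
    have hP1 : 1 ≤ #(dotProducts E E) := ((hne.product hne).image _).card_pos
    have hq : Fintype.card F ≤ Fintype.card (ι → F) :=
      Fintype.card_le_of_injective _ (Function.const_injective (β := F))
    calc #E * Fintype.card F ≤ 1 * Fintype.card (ι → F) := Nat.mul_le_mul hE1 hq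
      _ ≤ _ := Nat.mul_le_mul_right _ hP1

theorem card_mul_sq_le_card_dotProducts_mul_of_zero_notMem [Nonempty ι] {E : Finset (ι → F)}
    (h0 : (0 : ι → F) ∉ E) {c : ℝ} (hc : ∀ z ≠ 0, (#{x ∈ E | ∃ t : F, x = t • z} : ℝ) ≤ c) :
    (Fintype.card F : ℝ) * #E ^ 2 ≤
      #(dotProducts E E) * ((#E : ℝ) ^ 2 + c * Fintype.card (ι → F)) := by
  have key := card_mul_sq_le_card_dotProducts_mul E E h0 hc
  obtain ⟨z₀, hz₀⟩ := exists_ne (0 : ι → F)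
  have hc0 : 0 ≤ c := (Nat.cast_nonneg _).trans (hc z₀ hz₀)
  have hP : (0 : ℝ) ≤ #(dotProducts E E) := Nat.cast_nonneg _
  have hQ : (0 : ℝ) ≤ Fintype.card (ι → F) := Nat.cast_nonneg _
  set A : ℝ := (#E : ℝ)
  rcases (show 0 ≤ A from Nat.cast_nonneg _).eq_or_lt with hA | hA
  · rw [← hA, zero_pow two_ne_zero, mul_zero, zero_add]
    exact mul_nonneg hP (mul_nonneg hc0 hQ)
  have hdiv : (Fintype.card F : ℝ) * A ^ 2 ≤
      #(dotProducts E E) * (A ^ 2 + c * (Fintype.card (ι → F) - A)) :=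
    le_of_mul_le_mul_right (by linarith) (pow_pos hA 2)
  nlinarith [mul_nonneg hP (mul_nonneg hc0 hA.le)]

theorem card_mul_sq_le_card_dotProducts_mul_of_zero_mem [Nonempty ι] {E : Finset (ι → F)}
    (h0 : (0 : ι → F) ∈ E) {c : ℝ} (hc : ∀ z ≠ 0, (#{x ∈ E | ∃ t : F, x = t • z} : ℝ) ≤ c) :
    (Fintype.card F : ℝ) * #E ^ 2 ≤
      #(dotProducts E E) * ((#E : ℝ) ^ 2 + c * Fintype.card (ι → F)) := by
  -- `0` lies on every line, so removing it from `E` lowers every line count by one.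
  have hline₀ : ∀ z ≠ 0, (#{y ∈ E.erase 0 | ∃ t : F, y = t • z} : ℝ) ≤ c - 1 := fun z hz => by
    have h0z : (0 : ι → F) ∈ {x ∈ E | ∃ t : F, x = t • z} := mem_filter.2 ⟨h0, 0, by simp⟩
    rw [filter_erase, card_erase_of_mem h0z, Nat.cast_sub (card_pos.2 ⟨0, h0z⟩)]
    simpa using hc z hz
  have hc1 : 1 ≤ c := by
    obtain ⟨z₀, hz₀⟩ := exists_ne (0 : ι → F)
    linarith [hline₀ z₀ hz₀, (Nat.cast_nonneg _ : (0 : ℝ) ≤ #{y ∈ E.erase 0 | ∃ t : F, y = t • z₀})]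
  have key := card_mul_sq_le_card_dotProducts_mul E (E.erase 0) (notMem_erase 0 E) hline₀
  rw [card_erase_of_mem h0, Nat.cast_sub (card_pos.2 ⟨0, h0⟩), Nat.cast_one] at key
  have hsub : (#(dotProducts E (E.erase 0)) : ℝ) ≤ #(dotProducts E E) :=
    Nat.cast_le.2 (card_le_card (image_subset_image (product_subset_product_right
      (erase_subset 0 E))))
  have htriv : (#E * Fintype.card F : ℝ) ≤ #(dotProducts E E) * Fintype.card (ι → F) := by
    exact_mod_cast card_mul_le_card_dotProducts_mul E
  have hAQ : (#E : ℝ) ≤ Fintype.card (ι → F) := Nat.cast_le.2 (card_le_univ E)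
  have hA1 : (1 : ℝ) ≤ #E := Nat.one_le_cast.2 (card_pos.2 ⟨0, h0⟩)
  have hP : (0 : ℝ) ≤ #(dotProducts E E) := Nat.cast_nonneg _
  set A : ℝ := (#E : ℝ)
  set B := A * (A - 1)
  set R := B + (c - 1) * (Fintype.card (ι → F) - A)
  have hB : 0 ≤ B := mul_nonneg (by linarith) (by linarith)
  have hR : 0 ≤ R := add_nonneg hB (mul_nonneg (by linarith) (by linarith))
  have hqB : (Fintype.card F : ℝ) * B ≤ #(dotProducts E E) * R := by
    rcases hB.eq_or_lt with hB0 | hBpos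
    · exact (by rw [← hB0, mul_zero] : (Fintype.card F : ℝ) * B = 0).le.trans (mul_nonneg hP hR)
    refine le_of_mul_le_mul_right ?_ hBpos
    calc (Fintype.card F : ℝ) * B * B ≤ #(dotProducts E (E.erase 0)) * (R * B) := by linarith
      _ ≤ #(dotProducts E E) * (R * B) := by gcongr
      _ = _ := by ring
  nlinarith [mul_nonneg hP (mul_nonneg (by linarith : 0 ≤ c) (by linarith : 0 ≤ A))]

theorem card_mul_sq_le_card_dotProducts_mul_of_card_line_le [Nonempty ι] (E : Finset (ι → F))
    {c : ℝ} (hc : ∀ z ≠ 0, (#{x ∈ E | ∃ t : F, x = t • z} : ℝ) ≤ c) :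
    (Fintype.card F : ℝ) * #E ^ 2 ≤
      #(dotProducts E E) * ((#E : ℝ) ^ 2 + c * Fintype.card (ι → F)) := by
  by_cases h0 : (0 : ι → F) ∈ E
  · exact card_mul_sq_le_card_dotProducts_mul_of_zero_mem h0 hc
  · exact card_mul_sq_le_card_dotProducts_mul_of_zero_notMem h0 hc

end DotProduct

theorem sq_rpow_div_two_add_div {x : ℝ} (hx : 0 < x) (n : ℕ) (α : ℝ) :
    (x ^ ((n : ℝ) / 2 + α / (2 * n))) ^ 2 = x ^ (α / n) * x ^ n := by
  rw [← Real.rpow_natCast _ 2, ← Real.rpow_mul hx.le, ← Real.rpow_natCast x n,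
    ← Real.rpow_add hx]
  congr 1
  field_simp
  ring

theorem stmt_7_general {F : Type*} [Field F] [Fintype F] (d : ℕ) (hd : 0 < d)
    (Cgeom Csize α : ℝ) (hCgeom : 0 < Cgeom) (hCsize : 0 < Csize)
    (E : Finset (Fin d → F))
    (hline : ∀ y : Fin d → F, y ≠ 0 →
      (Set.ncard ((E : Set (Fin d → F)) ∩ {x | ∃ t : F, x = t • y}) : ℝ) ≤
        Cgeom * (Fintype.card F : ℝ) ^ (α / d))
    (hE : (E.card : ℝ) ≥
      Csize * (Fintype.card F : ℝ) ^ ((d : ℝ) / 2 + α / (2 * d))) :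
    (Set.ncard {t : F | ∃ x ∈ E, ∃ y ∈ E, t = ∑ i, x i * y i} : ℝ) ≥
      (Fintype.card F : ℝ) * Csize ^ 2 / (Csize ^ 2 + Cgeom) := by
  classical
  have : Nonempty (Fin d) := ⟨⟨0, hd⟩⟩
  have hdots : {t : F | ∃ x ∈ E, ∃ y ∈ E, t = ∑ i, x i * y i} = ↑(dotProducts E E) := by
    ext t
    simp [dotProducts, dotProduct, eq_comm, and_assoc]
  have key := card_mul_sq_le_card_dotProducts_mul_of_card_line_le E fun z hz => by
    rw [← Set.ncard_coe_finset, coe_filter]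
    exact hline z hz
  rw [Fintype.card_fun, Fintype.card_fin, Nat.cast_pow] at key
  have hq : (0 : ℝ) < Fintype.card F := Nat.cast_pos.2 Fintype.card_pos
  have hsize := mul_le_mul_of_nonneg_left (pow_le_pow_left₀ (by positivity) hE 2) hCgeom.le
  rw [mul_pow, sq_rpow_div_two_add_div hq] at hsize
  have hA : (0 : ℝ) < #E := lt_of_lt_of_le (by positivity) hE
  have hP : (0 : ℝ) ≤ #(dotProducts E E) := Nat.cast_nonneg _
  rw [hdots, Set.ncard_coe_finset, ge_iff_le, div_le_iff₀ (by positivity)]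
  refine le_of_mul_le_mul_right ?_ (pow_pos hA 2)
  nlinarith [mul_le_mul_of_nonneg_left key (sq_nonneg Csize), mul_le_mul_of_nonneg_left hsize hP]

/-- If every line through the origin meets `E ⊆ F_q^d` in at most `C_geom · q^(α/d)`
points and `|E| ≥ C_size · q^(d/2 + α/(2d))`, then the set of dot products of pairs of
elements of `E` has at least `q · C_size² / (C_size² + C_geom)` elements. -/
theorem stmt_7 {F : Type*} [Field F] [Fintype F] (d : ℕ) (hd : 0 < d)
    (Cgeom Csize α : ℝ) (hCgeom : 0 < Cgeom) (hCsize : 0 < Csize)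
    (hα0 : 0 ≤ α) (hαd : α ≤ d)
    (E : Finset (Fin d → F))
    (hline : ∀ y : Fin d → F, y ≠ 0 →
      (Set.ncard ((E : Set (Fin d → F)) ∩ {x | ∃ t : F, x = t • y}) : ℝ) ≤
        Cgeom * (Fintype.card F : ℝ) ^ (α / d))
    (hE : (E.card : ℝ) ≥
      Csize * (Fintype.card F : ℝ) ^ ((d : ℝ) / 2 + α / (2 * d))) :
    (Set.ncard {t : F | ∃ x ∈ E, ∃ y ∈ E, t = ∑ i, x i * y i} : ℝ) ≥
      (Fintype.card F : ℝ) * Csize ^ 2 / (Csize ^ 2 + Cgeom) :=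
  stmt_7_general d hd Cgeom Csize α hCgeom hCsize E hline hE
end

section
/- Let q be a prime power, F_q the finite field with q elements, and d a positive integer. Let E ⊆ F_q^d, and for t ∈ F_q define ν(t) = |{(x,y) ∈ E × E : x·y = t}|. Then for every t ∈ F_q with t ≠ 0, |ν(t) - |E|²/q| ≤ |E| · q^((d-1)/2). -/
/-!
With `f x = ∑_{y ∈ E} (q · 1[x ⬝ᵥ y = t] - 1)` one has `q ν(t) - |E|² = ∑_{x ∈ E} f x`, so by
Cauchy–Schwarz it suffices to bound `∑_{x ∈ F_q^d} f x ^ 2` by `|E| q^(d+1)`. Expanding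
`q · 1[x ⬝ᵥ y = t] - 1 = ∑_{s ≠ 0} ψ (s (x ⬝ᵥ y - t))` for a nontrivial additive character `ψ`
and summing over `x` first, the correlation of the summands for `y` and `y'` only sees the pairs
`s • y = s' • y'`. For `t ≠ 0` it is nonpositive when `y ≠ y'` (the two hyperplanes are either
transversal or parallel and disjoint) and at most `q^d (q - 1)` when `y = y'`.
-/

open Finset Matrix

namespace AddChar

variable {F R ι : Type*} [Field F] [Fintype F] [DecidableEq F] [CommRing R] [IsDomain R]
  {ψ : AddChar F R}

theorem sum_erase_zero_apply_mul (hψ : ψ.IsPrimitive) (c : F) :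
    ∑ s ∈ univ.erase 0, ψ (s * c) = (if c = 0 then (Fintype.card F : R) else 0) - 1 := by
  rw [sum_erase_eq_sub (mem_univ 0), sum_mulShift c hψ, zero_mul, map_zero_eq_one, Nat.cast_ite,
    Nat.cast_zero]

theorem sum_apply_dotProduct [Fintype ι] [DecidableEq ι] (hψ : ψ.IsPrimitive) (v : ι → F) :
    ∑ x : ι → F, ψ (x ⬝ᵥ v) = if v = 0 then (Fintype.card F : R) ^ Fintype.card ι else 0 := by
  split_ifs with hv
  · simp [hv]
  obtain ⟨i, hi⟩ := Function.ne_iff.mp hv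
  obtain ⟨b, hb⟩ := ne_one_iff.mp (hψ hi)
  let φ := ψ.compAddMonoidHom (AddMonoidHom.mk' (· ⬝ᵥ v) fun x y => add_dotProduct x y v)
  have hφ : φ ≠ 1 := ne_one_iff.mpr
    ⟨Pi.single i b, by simpa [φ, single_dotProduct, mulShift_apply, mul_comm] using hb⟩
  exact sum_eq_zero_of_ne_one hφ

end AddChar

section

variable {ι F : Type*} [Fintype ι] [Field F] [Fintype F] [DecidableEq F]

noncomputable def balancedIndicator (t : F) (y x : ι → F) : ℝ :=
  (if x ⬝ᵥ y = t then (Fintype.card F : ℝ) else 0) - 1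

theorem sum_sum_balancedIndicator (t : F) (E : Finset (ι → F)) :
    ∑ x ∈ E, ∑ y ∈ E, balancedIndicator t y x =
      Fintype.card F * #{p ∈ E ×ˢ E | p.1 ⬝ᵥ p.2 = t} - #E ^ 2 := by
  simp only [balancedIndicator, sum_sub_distrib, sum_const, nsmul_eq_mul, mul_one]
  rw [← sum_product' (f := fun x y => if x ⬝ᵥ y = t then (Fintype.card F : ℝ) else 0),
    ← sum_filter, sum_const, nsmul_eq_mul]
  ring

theorem ofReal_balancedIndicator {ψ : AddChar F ℂ} (hψ : ψ.IsPrimitive) {t c : F} {y x : ι → F}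
    (hc : c = 0 ↔ x ⬝ᵥ y = t) :
    (balancedIndicator t y x : ℂ) = ∑ s ∈ univ.erase 0, ψ (s * c) := by
  by_cases h : x ⬝ᵥ y = t <;> simp [balancedIndicator, AddChar.sum_erase_zero_apply_mul hψ, h, hc]

variable [DecidableEq ι]

theorem sum_balancedIndicator_mul {t : F} (ht : t ≠ 0) (y y' : ι → F) :
    ∑ x, balancedIndicator t y x * balancedIndicator t y' x =
      (Fintype.card F : ℝ) ^ Fintype.card ι * ∑ r ∈ univ.erase (0 : F),
        if r • y = y' then (if r = 1 then (Fintype.card F : ℝ) else 0) - 1 else 0 := by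
  obtain ⟨ψ, hψ1⟩ := AddChar.exists_apply_ne_zero.mpr (one_ne_zero (α := F))
  have hψ : ψ.IsPrimitive := .of_ne_one fun h => hψ1 (h ▸ AddChar.one_apply 1)
  set U := univ.erase (0 : F)
  apply Complex.ofReal_injective
  calc ((∑ x, balancedIndicator t y x * balancedIndicator t y' x : ℝ) : ℂ)
      = ∑ x, (∑ s ∈ U, ψ (s * (x ⬝ᵥ y - t))) * ∑ s' ∈ U, ψ (s' * (t - x ⬝ᵥ y')) := by
        push_cast
        refine sum_congr rfl fun x _ => ?_
        rw [ofReal_balancedIndicator hψ sub_eq_zero,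
          ofReal_balancedIndicator hψ (sub_eq_zero.trans eq_comm)]
    _ = ∑ s ∈ U, ∑ s' ∈ U, ψ (t * (s' - s)) * ∑ x, ψ (x ⬝ᵥ (s • y - s' • y')) := by
        simp_rw [sum_mul_sum, mul_sum]
        rw [sum_comm]
        refine sum_congr rfl fun s _ => ?_
        rw [sum_comm]
        refine sum_congr rfl fun s' _ => sum_congr rfl fun x _ => ?_
        rw [← AddChar.map_add_eq_mul, ← AddChar.map_add_eq_mul, dotProduct_sub,
          dotProduct_smul, dotProduct_smul, smul_eq_mul, smul_eq_mul]
        ring_nf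
    _ = ∑ s' ∈ U, ∑ r ∈ U, ψ (s' * (t * (1 - r))) *
          if r • y = y' then (Fintype.card F : ℂ) ^ Fintype.card ι else 0 := by
        rw [sum_comm]
        refine sum_congr rfl fun s' hs' => ?_
        have hs'0 : s' ≠ 0 := ne_of_mem_erase hs'
        -- substitute `s = r * s'`
        refine (sum_equiv (Equiv.mulRight₀ s' hs'0) (by simp [U, hs'0]) fun r _ => ?_).symm
        simp only [AddChar.sum_apply_dotProduct hψ, sub_eq_zero, Equiv.mulRight₀_apply, mul_smul,
          smul_comm r s', smul_right_inj hs'0]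
        ring_nf
    _ = (Fintype.card F : ℂ) ^ Fintype.card ι * ∑ r ∈ U,
          if r • y = y' then (if r = 1 then (Fintype.card F : ℂ) else 0) - 1 else 0 := by
        rw [sum_comm, mul_sum]
        refine sum_congr rfl fun r _ => ?_
        rw [← sum_mul, AddChar.sum_erase_zero_apply_mul hψ]
        simp only [mul_eq_zero, ht, false_or, sub_eq_zero, eq_comm (a := (1 : F))]
        split_ifs <;> ring
    _ = _ := by push_cast [apply_ite Complex.ofReal]; rfl

theorem sum_balancedIndicator_mul_le {t : F} (ht : t ≠ 0) (y y' : ι → F) :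
    ∑ x, balancedIndicator t y x * balancedIndicator t y' x ≤
      if y = y' then (Fintype.card F : ℝ) ^ Fintype.card ι * (Fintype.card F - 1) else 0 := by
  rw [sum_balancedIndicator_mul ht, ← mul_ite_zero]
  gcongr
  calc _ ≤ ∑ r ∈ univ.erase (0 : F),
          if r = 1 then (if y = y' then (Fintype.card F : ℝ) - 1 else 0) else 0 := by
        gcongr with r
        split_ifs <;> simp_all
    _ = _ := by rw [sum_ite_eq', if_pos (mem_erase.2 ⟨one_ne_zero, mem_univ _⟩)]

theorem sum_sq_sum_balancedIndicator_le {t : F} (ht : t ≠ 0) (E : Finset (ι → F)) :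
    ∑ x, (∑ y ∈ E, balancedIndicator t y x) ^ 2 ≤
      #E * ((Fintype.card F : ℝ) ^ Fintype.card ι * (Fintype.card F - 1)) := by
  calc ∑ x, (∑ y ∈ E, balancedIndicator t y x) ^ 2
      = ∑ y ∈ E, ∑ y' ∈ E, ∑ x, balancedIndicator t y x * balancedIndicator t y' x := by
        simp_rw [sq, sum_mul_sum]
        rw [sum_comm]
        exact sum_congr rfl fun y _ => sum_comm
    _ ≤ ∑ y ∈ E, ∑ y' ∈ E,
          if y = y' then (Fintype.card F : ℝ) ^ Fintype.card ι * (Fintype.card F - 1) else 0 := by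
        gcongr with y _ y' _
        exact sum_balancedIndicator_mul_le ht y y'
    _ = _ := by simp [sum_ite_eq]

theorem sq_sum_sum_balancedIndicator_le {t : F} (ht : t ≠ 0) (E : Finset (ι → F)) :
    (∑ x ∈ E, ∑ y ∈ E, balancedIndicator t y x) ^ 2 ≤
      #E ^ 2 * (Fintype.card F : ℝ) ^ (Fintype.card ι + 1) := by
  have hq : (1 : ℝ) ≤ Fintype.card F := mod_cast Fintype.card_pos
  calc (∑ x ∈ E, ∑ y ∈ E, balancedIndicator t y x) ^ 2
      ≤ #E * ∑ x ∈ E, (∑ y ∈ E, balancedIndicator t y x) ^ 2 := sq_sum_le_card_mul_sum_sq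
    _ ≤ #E * ∑ x, (∑ y ∈ E, balancedIndicator t y x) ^ 2 := by
        gcongr
        exact subset_univ E
    _ ≤ #E * (#E * ((Fintype.card F : ℝ) ^ Fintype.card ι * (Fintype.card F - 1))) := by
        gcongr
        exact sum_sq_sum_balancedIndicator_le ht E
    _ ≤ #E ^ 2 * (Fintype.card F : ℝ) ^ (Fintype.card ι + 1) := by
        rw [← mul_assoc, ← sq, pow_succ (Fintype.card F : ℝ)]
        gcongr
        linarith

theorem abs_sub_sq_div_le_of_sq_le {q N e : ℝ} {n : ℕ} (hq : 0 < q) (he : 0 ≤ e)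
    (h : (q * N - e ^ 2) ^ 2 ≤ e ^ 2 * q ^ (n + 1)) :
    |N - e ^ 2 / q| ≤ e * q ^ (((n : ℝ) - 1) / 2) := by
  refine abs_le_of_sq_le_sq ?_ (by positivity)
  have hpow : (q ^ (((n : ℝ) - 1) / 2)) ^ 2 = q ^ (n + 1) / q ^ 2 := by
    rw [← Real.rpow_natCast _ 2, ← Real.rpow_mul hq.le, ← Real.rpow_natCast q (n + 1),
      ← Real.rpow_natCast q 2, ← Real.rpow_sub hq]
    push_cast
    ring_nf
  rw [mul_pow, hpow, show N - e ^ 2 / q = (q * N - e ^ 2) / q by field_simp, div_pow,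
    ← mul_div_assoc]
  gcongr

end

open Finset in
theorem stmt_9_general {F : Type*} [Field F] [Fintype F] [DecidableEq F] (d : ℕ)
    (E : Finset (Fin d → F)) :
    ∀ t : F, t ≠ 0 →
      |(((E ×ˢ E).filter (fun p => ∑ i, p.1 i * p.2 i = t)).card : ℝ) -
          (E.card : ℝ) ^ 2 / (Fintype.card F : ℝ)| ≤
        (E.card : ℝ) * (Fintype.card F : ℝ) ^ (((d : ℝ) - 1) / 2) := by
  intro t ht
  refine abs_sub_sq_div_le_of_sq_le (Nat.cast_pos.2 Fintype.card_pos) (Nat.cast_nonneg _) ?_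
  have h := sq_sum_sum_balancedIndicator_le ht E
  rwa [sum_sum_balancedIndicator, Fintype.card_fin] at h

open Finset in
/-- For `E ⊆ F_q^d` and `ν(t) = |{(x,y) ∈ E × E : x·y = t}|`, one has
`|ν(t) - |E|²/q| ≤ |E| · q^((d-1)/2)` for every `t ≠ 0`. -/
theorem stmt_9 {F : Type*} [Field F] [Fintype F] [DecidableEq F] (d : ℕ) (hd : 0 < d)
    (E : Finset (Fin d → F)) :
    ∀ t : F, t ≠ 0 →
      |(((E ×ˢ E).filter (fun p => ∑ i, p.1 i * p.2 i = t)).card : ℝ) -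
          (E.card : ℝ) ^ 2 / (Fintype.card F : ℝ)| ≤
        (E.card : ℝ) * (Fintype.card F : ℝ) ^ (((d : ℝ) - 1) / 2) :=
  stmt_9_general d E
end

section
/- Let q be a prime power, F_q the finite field with q elements, and d a positive integer. Let E ⊆ F_q^d with |E| > q^((d+1)/2). Then for every t ∈ F_q with t ≠ 0, the number of pairs ν(t) = |{(x,y) ∈ E × E : x·y = t}| satisfies ν(t) ≥ |E|²/q - |E|·q^((d-1)/2) > 0. -/
/-!
Put `N x = #{y ∈ E | x ⬝ᵥ y = t}`. Summing `q N x - |E|` over `x ∈ E` gives `q ν(t) - |E|²`,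
so by Cauchy–Schwarz `(q ν(t) - |E|²)² ≤ |E| ∑_{x ∈ F^d} (q N x - |E|)²`. With a primitive
additive character `ψ`, `q N x - |E| = ∑_{y ∈ E} ∑_{s ≠ 0} ψ (s (x ⬝ᵥ y - t))`; squaring and
summing over all `x`, orthogonality keeps only the terms with `s y = s' y'`, i.e. `y' = r y` for
a unit `r`, and since `t ≠ 0` the sum equals `q^d (q |E| - ∑_{y ∈ E} #{r ≠ 0 | r y ∈ E})`, which
is at most `q^(d+1) |E|`. Hence `|q ν(t) - |E|²| ≤ |E| q^((d+1)/2)`.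
-/

open Finset

namespace AddChar

variable {F R : Type*} [CommRing R] [IsDomain R]

lemma sum_dotProduct_eq_ite [CommRing F] [Fintype F] {ι : Type*} [Fintype ι] [DecidableEq ι]
    {ψ : AddChar F R} (hψ : ψ.IsPrimitive) (v : ι → F) [Decidable (v = 0)] :
    ∑ x : ι → F, ψ (x ⬝ᵥ v) = if v = 0 then (Fintype.card F : R) ^ Fintype.card ι else 0 := by
  split_ifs with hv
  · simp [hv]
  obtain ⟨i, hi⟩ := Function.ne_iff.mp hv
  obtain ⟨a, ha⟩ := ne_one_iff.mp (hψ hi)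
  refine eq_zero_of_mul_eq_self_left ha ?_
  rw [mul_sum]
  refine Fintype.sum_equiv (Equiv.addLeft (Pi.single i a)) _ _ fun x ↦ ?_
  simp [add_dotProduct, single_dotProduct, map_add_eq_mul, mul_comm]

lemma sum_units_mul_eq_ite [Field F] [Fintype F] [DecidableEq F] {ψ : AddChar F R}
    (hψ : ψ.IsPrimitive) (b : F) :
    ∑ s : Fˣ, ψ (s * b) = (if b = 0 then (Fintype.card F : R) else 0) - 1 := by
  have h := sum_mulShift b hψ
  rw [Fintype.sum_eq_add_sum_subtype_ne _ 0,
    ← Fintype.sum_equiv unitsEquivNeZero _ _ fun _ ↦ rfl] at h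
  simp only [zero_mul, map_zero_eq_one, Nat.cast_ite, Nat.cast_zero] at h
  rw [← h, add_sub_cancel_left]
  rfl

lemma sum_units_mul_neg [Field F] [Fintype F] [DecidableEq F] {ψ : AddChar F R}
    (hψ : ψ.IsPrimitive) (b : F) : ∑ s : Fˣ, ψ (s * -b) = ∑ s : Fˣ, ψ (s * b) := by
  simp only [sum_units_mul_eq_ite hψ, neg_eq_zero]

end AddChar

open AddChar

section

variable {F R ι : Type*} [Field F] [Fintype F] [DecidableEq F] [CommRing R] [IsDomain R]
  [Fintype ι] {ψ : AddChar F R}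

lemma sum_units_addChar_dotProduct_sub_eq (hψ : ψ.IsPrimitive) (E : Finset (ι → F))
    (x : ι → F) (t : F) :
    ∑ y ∈ E, ∑ s : Fˣ, ψ (s * (x ⬝ᵥ y - t)) =
      (((Fintype.card F * #{y ∈ E | x ⬝ᵥ y = t} - #E : ℤ)) : R) := by
  simp only [sum_units_mul_eq_ite hψ, sub_eq_zero]
  rw [sum_sub_distrib, ← sum_filter, sum_const, sum_const]
  push_cast
  simp [nsmul_eq_mul, mul_comm]

lemma sum_units_ite_smul_eq (hψ : ψ.IsPrimitive) {t : F} (ht : t ≠ 0) (y y' : ι → F) :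
    ∑ s : Fˣ, ∑ s' : Fˣ, (if s • y = s' • y' then ψ (t * (s' - s)) else 0) =
      ∑ r : Fˣ, if r • y = y' then (if r = 1 then (Fintype.card F : R) else 0) - 1 else 0 := by
  rw [sum_comm]
  have reindex (s' : Fˣ) : ∑ s : Fˣ, (if s • y = s' • y' then ψ (t * (s' - s)) else 0) =
      ∑ r : Fˣ, if r • y = y' then ψ (s' * (t * (1 - r))) else 0 := by
    refine (Fintype.sum_equiv (Equiv.mulRight s') _ _ fun r ↦ ?_).symm
    simp only [Equiv.coe_mulRight, mul_comm r s', mul_smul, smul_left_cancel_iff, Units.val_mul]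
    congr 2
    ring
  simp only [reindex]
  rw [sum_comm]
  refine sum_congr rfl fun r _ ↦ ?_
  by_cases hr : r • y = y'
  · have hzero : t * (1 - r) = 0 ↔ r = 1 := by simp [ht, sub_eq_zero, eq_comm (a := (1 : F))]
    simp only [hr, if_true, sum_units_mul_eq_ite hψ, hzero]
  · simp only [hr, if_false, sum_const_zero]

lemma sum_sum_units_ite_smul_eq_card (hψ : ψ.IsPrimitive) {t : F} (ht : t ≠ 0)
    {E : Finset (ι → F)} {y : ι → F} (hy : y ∈ E) :
    ∑ y' ∈ E, ∑ s : Fˣ, ∑ s' : Fˣ, (if s • y = s' • y' then ψ (t * (s' - s)) else 0) =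
      ((Fintype.card F - #{r : Fˣ | r • y ∈ E} : ℤ) : R) := by
  have one_mem : (1 : Fˣ) ∈ ({r : Fˣ | r • y ∈ E} : Finset Fˣ) := by simpa using hy
  simp only [sum_units_ite_smul_eq hψ ht]
  rw [sum_comm]
  simp only [sum_ite_eq]
  rw [← sum_filter, sum_sub_distrib, sum_ite_eq', if_pos one_mem, sum_const]
  push_cast
  simp

lemma sum_sq_card_dotProduct_eq [DecidableEq ι] (hψ : ψ.IsPrimitive) {t : F} (ht : t ≠ 0)
    (E : Finset (ι → F)) :
    ∑ x : ι → F, ((Fintype.card F * #{y ∈ E | x ⬝ᵥ y = t} - #E : ℤ) : R) ^ 2 =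
      ((Fintype.card F ^ Fintype.card ι *
        (Fintype.card F * #E - ∑ y ∈ E, #{r : Fˣ | r • y ∈ E}) : ℤ) : R) := by
  have expand (x : ι → F) :
      ((Fintype.card F * #{y ∈ E | x ⬝ᵥ y = t} - #E : ℤ) : R) ^ 2 =
        ∑ y ∈ E, ∑ y' ∈ E, ∑ s : Fˣ, ∑ s' : Fˣ,
          ψ (t * (s' - s)) * ψ (x ⬝ᵥ (s • y - s' • y')) := by
    have hD := sum_units_addChar_dotProduct_sub_eq hψ E x t
    have hD' : ∑ y' ∈ E, ∑ s' : Fˣ, ψ (s' * -(x ⬝ᵥ y' - t)) =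
        ((Fintype.card F * #{y ∈ E | x ⬝ᵥ y = t} - #E : ℤ) : R) := by
      simp only [sum_units_mul_neg hψ, hD]
    rw [sq]
    nth_rw 1 [← hD]
    rw [← hD', sum_mul_sum]
    refine sum_congr rfl fun y _ ↦ sum_congr rfl fun y' _ ↦ ?_
    rw [sum_mul_sum]
    refine sum_congr rfl fun s _ ↦ ?_
    refine sum_congr rfl fun s' _ ↦ ?_
    rw [← map_add_eq_mul, ← map_add_eq_mul]
    congr 1
    simp only [Units.smul_def, dotProduct_sub, dotProduct_smul, smul_eq_mul]
    ring
  simp only [expand]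
  have orthogonality (y y' : ι → F) (s s' : Fˣ) :
      ∑ x : ι → F, ψ (t * (s' - s)) * ψ (x ⬝ᵥ (s • y - s' • y')) =
        (Fintype.card F : R) ^ Fintype.card ι *
          if s • y = s' • y' then ψ (t * (s' - s)) else 0 := by
    rw [← mul_sum, sum_dotProduct_eq_ite hψ]
    simp only [sub_eq_zero]
    split_ifs <;> ring
  calc ∑ x : ι → F, ∑ y ∈ E, ∑ y' ∈ E, ∑ s : Fˣ, ∑ s' : Fˣ,
          ψ (t * (s' - s)) * ψ (x ⬝ᵥ (s • y - s' • y'))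
      = ∑ y ∈ E, ∑ y' ∈ E, ∑ s : Fˣ, ∑ s' : Fˣ, ∑ x : ι → F,
          ψ (t * (s' - s)) * ψ (x ⬝ᵥ (s • y - s' • y')) := by
        rw [sum_comm]; refine sum_congr rfl fun y _ ↦ ?_
        rw [sum_comm]; refine sum_congr rfl fun y' _ ↦ ?_
        rw [sum_comm]; refine sum_congr rfl fun s _ ↦ ?_
        rw [sum_comm]
    _ = (Fintype.card F : R) ^ Fintype.card ι * ∑ y ∈ E, ∑ y' ∈ E, ∑ s : Fˣ, ∑ s' : Fˣ,
          if s • y = s' • y' then ψ (t * (s' - s)) else 0 := by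
        simp only [orthogonality, mul_sum]
    _ = (Fintype.card F : R) ^ Fintype.card ι *
          ∑ y ∈ E, ((Fintype.card F - #{r : Fˣ | r • y ∈ E} : ℤ) : R) := by
        rw [sum_congr rfl fun y hy ↦ sum_sum_units_ite_smul_eq_card hψ ht hy]
    _ = _ := by
        push_cast
        rw [sum_sub_distrib, sum_const, nsmul_eq_mul, mul_comm (#E : R)]

lemma sum_sq_card_dotProduct_le [DecidableEq ι] {t : F} (ht : t ≠ 0) (E : Finset (ι → F)) :
    ∑ x : ι → F, ((Fintype.card F * #{y ∈ E | x ⬝ᵥ y = t} - #E : ℤ)) ^ 2 ≤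
      Fintype.card F ^ (Fintype.card ι + 1) * #E := by
  have h : ∑ x : ι → F, ((Fintype.card F * #{y ∈ E | x ⬝ᵥ y = t} - #E : ℤ)) ^ 2 =
      Fintype.card F ^ Fintype.card ι *
        (Fintype.card F * #E - ∑ y ∈ E, (#{r : Fˣ | r • y ∈ E} : ℤ)) := by
    exact_mod_cast sum_sq_card_dotProduct_eq (FiniteField.primitiveChar_to_Complex_isPrimitive F)
      ht E
  rw [h, pow_succ, mul_assoc]
  gcongr
  exact sub_le_self _ (sum_nonneg fun _ _ ↦ Nat.cast_nonneg _)

lemma sq_card_dotProduct_sub_le [DecidableEq ι] {t : F} (ht : t ≠ 0) (E : Finset (ι → F)) :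
    ((Fintype.card F * #{p ∈ E ×ˢ E | p.1 ⬝ᵥ p.2 = t} - #E ^ 2 : ℤ)) ^ 2 ≤
      Fintype.card F ^ (Fintype.card ι + 1) * #E ^ 2 := by
  have hcount : #{p ∈ E ×ˢ E | p.1 ⬝ᵥ p.2 = t} = ∑ x ∈ E, #{y ∈ E | x ⬝ᵥ y = t} := by
    simp only [card_filter, sum_product]
  calc ((Fintype.card F * #{p ∈ E ×ˢ E | p.1 ⬝ᵥ p.2 = t} - #E ^ 2 : ℤ)) ^ 2
      = (∑ x ∈ E, ((Fintype.card F * #{y ∈ E | x ⬝ᵥ y = t} - #E : ℤ))) ^ 2 := by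
        rw [hcount, Nat.cast_sum, mul_sum, sum_sub_distrib, sum_const, nsmul_eq_mul]
        ring
    _ ≤ #E * ∑ x ∈ E, ((Fintype.card F * #{y ∈ E | x ⬝ᵥ y = t} - #E : ℤ)) ^ 2 :=
        sq_sum_le_card_mul_sum_sq
    _ ≤ #E * ∑ x : ι → F, ((Fintype.card F * #{y ∈ E | x ⬝ᵥ y = t} - #E : ℤ)) ^ 2 := by
        gcongr
        exact subset_univ E
    _ ≤ #E * (Fintype.card F ^ (Fintype.card ι + 1) * #E) := by
        gcongr
        exact sum_sq_card_dotProduct_le ht E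
    _ = Fintype.card F ^ (Fintype.card ι + 1) * #E ^ 2 := by ring

end

open Finset in
theorem stmt_10_general {F : Type*} [Field F] [Fintype F] [DecidableEq F] (d : ℕ)
    (E : Finset (Fin d → F))
    (hE : (E.card : ℝ) > (Fintype.card F : ℝ) ^ (((d : ℝ) + 1) / 2)) :
    ∀ t : F, t ≠ 0 →
      (((E ×ˢ E).filter (fun p => ∑ i, p.1 i * p.2 i = t)).card : ℝ) ≥
          (E.card : ℝ) ^ 2 / (Fintype.card F : ℝ) -
            (E.card : ℝ) * (Fintype.card F : ℝ) ^ (((d : ℝ) - 1) / 2) ∧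
        (E.card : ℝ) ^ 2 / (Fintype.card F : ℝ) -
          (E.card : ℝ) * (Fintype.card F : ℝ) ^ (((d : ℝ) - 1) / 2) > 0 := by
  intro t ht
  have hq : (0 : ℝ) < Fintype.card F := by exact_mod_cast Fintype.card_pos
  set Q := (Fintype.card F : ℝ) ^ (((d : ℝ) + 1) / 2)
  have hQ_sq : Q ^ 2 = (Fintype.card F : ℝ) ^ (d + 1) := by
    rw [← Real.rpow_natCast, ← Real.rpow_mul hq.le]
    norm_num [← Real.rpow_natCast]
  have hQ_div : (Fintype.card F : ℝ) ^ (((d : ℝ) - 1) / 2) = Q / Fintype.card F := by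
    rw [← Real.rpow_sub_one hq.ne']
    ring_nf
  set ν := #{p ∈ E ×ˢ E | ∑ i, p.1 i * p.2 i = t}
  have hsq : ((Fintype.card F * ν - #E ^ 2 : ℤ)) ^ 2 ≤ Fintype.card F ^ (d + 1) * #E ^ 2 := by
    have h := sq_card_dotProduct_sub_le ht E
    rwa [Fintype.card_fin] at h
  have hbound : -(#E * Q) ≤ Fintype.card F * ν - (#E : ℝ) ^ 2 := by
    refine (abs_le_of_sq_le_sq' ?_ (by positivity)).1
    rw [mul_pow, hQ_sq, mul_comm ((#E : ℝ) ^ 2)]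
    exact_mod_cast hsq
  rw [hQ_div, mul_div_assoc', ← sub_div]
  constructor
  · rw [ge_iff_le, div_le_iff₀ hq]
    linarith
  · exact div_pos (by nlinarith [hE, (by positivity : 0 ≤ Q)]) hq

open Finset in
/-- If `E ⊆ F_q^d` with `|E| > q^((d+1)/2)`, then for every nonzero `t`,
`ν(t) ≥ |E|²/q - |E|·q^((d-1)/2) > 0`. -/
theorem stmt_10 {F : Type*} [Field F] [Fintype F] [DecidableEq F] (d : ℕ) (hd : 0 < d)
    (E : Finset (Fin d → F))
    (hE : (E.card : ℝ) > (Fintype.card F : ℝ) ^ (((d : ℝ) + 1) / 2)) :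
    ∀ t : F, t ≠ 0 →
      (((E ×ˢ E).filter (fun p => ∑ i, p.1 i * p.2 i = t)).card : ℝ) ≥
          (E.card : ℝ) ^ 2 / (Fintype.card F : ℝ) -
            (E.card : ℝ) * (Fintype.card F : ℝ) ^ (((d : ℝ) - 1) / 2) ∧
        (E.card : ℝ) ^ 2 / (Fintype.card F : ℝ) -
          (E.card : ℝ) * (Fintype.card F : ℝ) ^ (((d : ℝ) - 1) / 2) > 0 :=
  stmt_10_general d E hE
end

section
/- Let q be a prime power, F_q the finite field with q elements, d a positive integer, and let C_geom > 0 and 0 ≤ α ≤ d be real numbers. Let E ⊆ F_q^d with 0 ∉ E be such that |E ∩ l_y| ≤ C_geom · q^(α/d) for every y ∈ F_q^d with y ≠ 0, where l_y = {t·y : t ∈ F_q}. For t ∈ F_q set ν(t) = |{(x,y) ∈ E × E : x·y = t}|. Then ∑_{t ∈ F_q} ν(t)² ≤ C_geom · |E|² · q^(d - 1 + α/d) + |E|⁴ / q. -/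
/-! Write `ν(t) = ∑_{y ∈ E} m_y(t)` with `m_y(t) = #{x ∈ E | x ⬝ᵥ y = t}`. Every row `m_y` sums to
`|E|`, so Cauchy–Schwarz applied to the deviations from the mean `|E|/q` gives
`∑ ν² ≤ |E|⁴/q + |E| ∑_{y ∈ E} W(y)`, where `W(y) = ∑_t m_y(t)² - |E|²/q ≥ 0` is the excess of the
number of collisions `x ⬝ᵥ y = x' ⬝ᵥ y`. The weight `W` is invariant under `y ↦ s • y` for `s ≠ 0`,
and its total over `F_q^d` is `|E| q^(d-1) (q-1)`, since a nonzero linear form has `q^(d-1)` zeros.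
Spreading each `W(y)` over the `q - 1` points `s • y` and using that a line through the origin
contains at most `C q^(α/d)` points of `E` yields `∑_{y ∈ E} W(y) ≤ C q^(α/d) |E| q^(d-1)`. -/

open Finset Fintype

section FiberSquares

variable {α β : Type*} [Fintype β] [DecidableEq β]

lemma sum_sq_card_fiber (s : Finset α) (f : α → β) :
    ∑ b, #{a ∈ s | f a = b} ^ 2 = #{p ∈ s ×ˢ s | f p.1 = f p.2} := by
  rw [card_eq_sum_card_fiberwise (f := fun p => f p.1) (t := univ) fun _ _ => mem_univ _]
  refine sum_congr rfl fun b _ => ?_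
  rw [sq, ← card_product]
  congr 1
  ext p
  simp only [mem_product, mem_filter]
  grind

end FiberSquares

section Variance

variable {ι κ : Type*} [Fintype κ] [Nonempty κ]

lemma sum_sub_mean_sq (a : κ → ℝ) :
    ∑ k, (a k - (∑ j, a j) / card κ) ^ 2 = ∑ k, a k ^ 2 - (∑ k, a k) ^ 2 / card κ := by
  have hκ : (card κ : ℝ) ≠ 0 := by positivity
  simp only [sub_sq, sum_add_distrib, sum_sub_distrib, sum_const, card_univ, ← sum_mul,
    nsmul_eq_mul]
  field_simp
  rw [← mul_sum]
  ring

lemma sum_sq_sum_sub_le (s : Finset ι) (f : ι → κ → ℝ) :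
    ∑ k, (∑ i ∈ s, f i k) ^ 2 - (∑ k, ∑ i ∈ s, f i k) ^ 2 / card κ ≤
      #s * ∑ i ∈ s, (∑ k, f i k ^ 2 - (∑ k, f i k) ^ 2 / card κ) := by
  set g : ι → κ → ℝ := fun i k => f i k - (∑ j, f i j) / card κ
  have hg : ∀ k, ∑ i ∈ s, f i k - (∑ j, ∑ i ∈ s, f i j) / card κ = ∑ i ∈ s, g i k := by
    intro k
    rw [sum_comm, sum_div, ← sum_sub_distrib]
  calc _ = ∑ k, (∑ i ∈ s, g i k) ^ 2 := by simp only [← sum_sub_mean_sq, hg]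
    _ ≤ ∑ k, #s * ∑ i ∈ s, g i k ^ 2 := sum_le_sum fun k _ => sq_sum_le_card_mul_sum_sq
    _ = _ := by rw [← mul_sum, sum_comm]; simp only [g, sum_sub_mean_sq]

end Variance

section Lines

variable {F V : Type*} [Field F] [Fintype F] [AddCommGroup V] [Module F V] [Fintype V]
  [DecidableEq V]

lemma card_sub_one_mul_sum_le {E : Finset V} (h0 : 0 ∉ E) {W : V → ℝ} (hW : 0 ≤ W)
    (hW_smul : ∀ s : F, s ≠ 0 → ∀ v, W (s • v) = W v) {K : ℝ} (hK : 0 ≤ K)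
    (hline : ∀ y : V, y ≠ 0 → (Set.ncard ((E : Set V) ∩ {x | ∃ t : F, x = t • y}) : ℝ) ≤ K) :
    (card F - 1 : ℝ) * ∑ y ∈ E, W y ≤ K * ∑ z, W z := by
  classical
  set S := E ×ˢ (univ.erase (0 : F))
  have hfiber : ∀ z, (#{p ∈ S | p.2 • p.1 = z} : ℝ) ≤ K := by
    intro z
    by_cases hz : z = 0
    · have hempty : {p ∈ S | p.2 • p.1 = z} = ∅ := by
        refine filter_false_of_mem fun p hp => ?_
        obtain ⟨hp1, hp2⟩ := mem_product.1 hp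
        rw [hz]
        exact smul_ne_zero (ne_of_mem_erase hp2) (ne_of_mem_of_not_mem hp1 h0)
      simpa [hempty] using hK
    refine le_trans ?_ (hline z hz)
    rw [← Set.ncard_coe_finset, Nat.cast_le]
    refine Set.ncard_le_ncard_of_injOn Prod.fst (fun p hp => ?_) (fun p hp p' hp' hpp' => ?_)
      (Set.toFinite _)
    · obtain ⟨hpS, rfl⟩ := mem_filter.1 (mem_coe.1 hp)
      obtain ⟨hp1, hp2⟩ := mem_product.1 hpS
      exact ⟨hp1, p.2⁻¹, (inv_smul_smul₀ (ne_of_mem_erase hp2) _).symm⟩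
    · obtain ⟨hpS, hpz⟩ := mem_filter.1 (mem_coe.1 hp)
      obtain ⟨-, hp'z⟩ := mem_filter.1 (mem_coe.1 hp')
      have hy : p.1 ≠ 0 := ne_of_mem_of_not_mem (mem_product.1 hpS).1 h0
      refine Prod.ext hpp' (smul_left_injective F hy ?_)
      dsimp only
      rw [hpz, hpp', hp'z]
  calc (card F - 1 : ℝ) * ∑ y ∈ E, W y = ∑ p ∈ S, W (p.2 • p.1) := by
        rw [sum_product, mul_sum]
        refine sum_congr rfl fun y _ => ?_
        rw [sum_congr rfl fun s hs => hW_smul s (ne_of_mem_erase hs) y, sum_const,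
          card_erase_of_mem (mem_univ _), card_univ, nsmul_eq_mul,
          Nat.cast_sub Fintype.one_lt_card.le, Nat.cast_one]
    _ = ∑ z, #{p ∈ S | p.2 • p.1 = z} * W z := by
        rw [← sum_fiberwise_of_maps_to (t := univ) (g := fun p => p.2 • p.1) fun _ _ => mem_univ _]
        refine sum_congr rfl fun z _ => ?_
        rw [sum_congr rfl fun p hp => congrArg W (mem_filter.1 hp).2, sum_const, nsmul_eq_mul]
    _ ≤ ∑ z, K * W z := sum_le_sum fun z _ => mul_le_mul_of_nonneg_right (hfiber z) (hW z)
    _ = K * ∑ z, W z := (mul_sum _ _ _).symm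

end Lines

section DotProduct

variable {ι F : Type*} [Fintype ι] [Field F] [DecidableEq F]

def dotCount (E : Finset (ι → F)) (y : ι → F) (t : F) : ℕ := #{x ∈ E | x ⬝ᵥ y = t}

def dotCollisions (E : Finset (ι → F)) (y : ι → F) : ℕ := #{p ∈ E ×ˢ E | p.1 ⬝ᵥ y = p.2 ⬝ᵥ y}

variable (E : Finset (ι → F))

lemma card_filter_dotProduct_eq_sum_dotCount (t : F) :
    #{p ∈ E ×ˢ E | p.1 ⬝ᵥ p.2 = t} = ∑ y ∈ E, dotCount E y t := by
  simp only [dotCount, card_filter, sum_product_right]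

lemma dotCollisions_smul {s : F} (hs : s ≠ 0) (y : ι → F) :
    dotCollisions E (s • y) = dotCollisions E y := by
  simp only [dotCollisions, dotProduct_smul, smul_eq_mul, mul_right_inj' hs]

variable [Fintype F]

lemma sum_dotCount (y : ι → F) : ∑ t, dotCount E y t = #E :=
  (card_eq_sum_card_fiberwise fun _ _ => mem_univ _).symm

lemma sum_sq_dotCount (y : ι → F) : ∑ t, dotCount E y t ^ 2 = dotCollisions E y :=
  sum_sq_card_fiber E _

lemma sq_card_div_le_dotCollisions (y : ι → F) :
    (#E : ℝ) ^ 2 / card F ≤ dotCollisions E y := by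
  rw [div_le_iff₀ (by positivity), ← sum_sq_dotCount, ← sum_dotCount E y, mul_comm]
  push_cast
  simpa using sq_sum_le_card_mul_sum_sq (s := univ) (f := fun t => (dotCount E y t : ℝ))

lemma sum_sq_sum_dotCount_le :
    ∑ t, (∑ y ∈ E, (dotCount E y t : ℝ)) ^ 2 ≤
      #E ^ 4 / card F + #E * ∑ y ∈ E, ((dotCollisions E y : ℝ) - #E ^ 2 / card F) := by
  have hvar := sum_sq_sum_sub_le E fun y t => (dotCount E y t : ℝ)
  have hrow : ∀ y, ∑ t, (dotCount E y t : ℝ) = #E := fun y => by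
    exact_mod_cast sum_dotCount E y
  have hsq : ∀ y, ∑ t, (dotCount E y t : ℝ) ^ 2 = dotCollisions E y := fun y => by
    exact_mod_cast sum_sq_dotCount E y
  rw [sum_comm] at hvar
  simp only [hrow, hsq, sum_const, nsmul_eq_mul, ← sq, ← pow_mul] at hvar
  linarith

variable [DecidableEq ι]

lemma card_dotProduct_eq_zero {v : ι → F} (hv : v ≠ 0) :
    (#{z | v ⬝ᵥ z = 0} : ℝ) = card F ^ card ι / card F := by
  obtain ⟨i, hi⟩ := Function.ne_iff.mp hv
  let f : (ι → F) →+ F := AddMonoidHom.mk' (v ⬝ᵥ ·) (dotProduct_add v)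
  have hrange : ∀ t, t ∈ Set.range f := fun t =>
    ⟨Pi.single i (t / v i), by simp [f, dotProduct_single, mul_div_cancel₀ _ hi]⟩
  have hcount := card_eq_sum_card_fiberwise (s := univ) (t := univ) (f := f)
    fun _ _ => mem_univ _
  rw [sum_congr rfl fun t _ => AddMonoidHom.card_fiber_eq_of_mem_range f (hrange t) (hrange 0),
    sum_const, card_univ, card_univ, card_fun, smul_eq_mul] at hcount
  rw [eq_div_iff (by positivity)]
  exact_mod_cast (mul_comm _ _).trans hcount.symm

lemma sum_dotCollisions :
    ∑ y, (dotCollisions E y : ℝ) =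
      #E ^ 2 * (card F ^ card ι / card F) + #E * (card F ^ card ι - card F ^ card ι / card F) := by
  have hpair : ∀ x x' : ι → F, (#{y | x ⬝ᵥ y = x' ⬝ᵥ y} : ℝ) = card F ^ card ι / card F +
      if x = x' then (card F : ℝ) ^ card ι - card F ^ card ι / card F else 0 := by
    intro x x'
    split_ifs with h
    · subst h
      simp
    · rw [filter_congr fun y _ => by rw [← sub_eq_zero, ← sub_dotProduct],
        card_dotProduct_eq_zero (sub_ne_zero.2 h), add_zero]
  calc ∑ y, (dotCollisions E y : ℝ) = ∑ p ∈ E ×ˢ E, (#{y | p.1 ⬝ᵥ y = p.2 ⬝ᵥ y} : ℝ) := by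
        simp only [dotCollisions, card_filter]
        push_cast
        exact sum_comm
    _ = _ := by
        simp only [hpair, sum_add_distrib, sum_const, card_product, nsmul_eq_mul, Nat.cast_mul,
          sum_product, Finset.sum_ite_eq, Finset.sum_ite_mem, inter_self]
        ring

lemma sum_dotCollisions_sub_le (h0 : 0 ∉ E) {K : ℝ} (hK : 0 ≤ K)
    (hline : ∀ y : ι → F, y ≠ 0 →
      (Set.ncard ((E : Set (ι → F)) ∩ {x | ∃ t : F, x = t • y}) : ℝ) ≤ K) :
    ∑ y ∈ E, ((dotCollisions E y : ℝ) - #E ^ 2 / card F) ≤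
      K * (#E * (card F ^ card ι / card F)) := by
  have hq : (1 : ℝ) < card F := by exact_mod_cast Fintype.one_lt_card
  set W := fun y => (dotCollisions E y : ℝ) - #E ^ 2 / card F
  have key := card_sub_one_mul_sum_le h0 (W := W)
    (fun y => sub_nonneg.2 (sq_card_div_le_dotCollisions E y))
    (fun s hs y => by simp only [W, dotCollisions_smul E hs]) hK hline
  have htotal : ∑ z, W z = (card F - 1) * (#E * (card F ^ card ι / card F)) := by
    simp only [W, sum_sub_distrib, sum_dotCollisions, sum_const, card_univ, card_fun,
      nsmul_eq_mul]
    push_cast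
    field_simp
    ring
  rw [htotal, mul_left_comm] at key
  exact le_of_mul_le_mul_left key (sub_pos.2 hq)

end DotProduct

theorem stmt_12_general {F : Type*} [Field F] [Fintype F] [DecidableEq F] (d : ℕ)
    (Cgeom α : ℝ) (hCgeom : 0 < Cgeom)
    (E : Finset (Fin d → F)) (h0 : (0 : Fin d → F) ∉ E)
    (hline : ∀ y : Fin d → F, y ≠ 0 →
      (Set.ncard ((E : Set (Fin d → F)) ∩ {x | ∃ t : F, x = t • y}) : ℝ) ≤
        Cgeom * (Fintype.card F : ℝ) ^ (α / d)) :
    ∑ t : F, (((E ×ˢ E).filter (fun p => ∑ i, p.1 i * p.2 i = t)).card : ℝ) ^ 2 ≤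
      Cgeom * (E.card : ℝ) ^ 2 * (Fintype.card F : ℝ) ^ ((d : ℝ) - 1 + α / d) +
        (E.card : ℝ) ^ 4 / (Fintype.card F : ℝ) := by
  have hq : (0 : ℝ) < card F := by positivity
  have hK : 0 ≤ Cgeom * (card F : ℝ) ^ (α / d) := by positivity
  calc ∑ t : F, (#{p ∈ E ×ˢ E | p.1 ⬝ᵥ p.2 = t} : ℝ) ^ 2
      = ∑ t, (∑ y ∈ E, (dotCount E y t : ℝ)) ^ 2 := by
        simp only [card_filter_dotProduct_eq_sum_dotCount, Nat.cast_sum]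
    _ ≤ #E ^ 4 / card F + #E * ∑ y ∈ E, ((dotCollisions E y : ℝ) - #E ^ 2 / card F) :=
        sum_sq_sum_dotCount_le E
    _ ≤ #E ^ 4 / card F + #E * (Cgeom * card F ^ (α / d) * (#E * (card F ^ d / card F))) := by
        grw [sum_dotCollisions_sub_le E h0 hK hline, Fintype.card_fin]
    _ = _ := by
        rw [Real.rpow_add hq, Real.rpow_sub hq, Real.rpow_natCast, Real.rpow_one]
        ring

open Finset in
/-- If `0 ∉ E ⊆ F_q^d` and every line through the origin meets `E` in at most
`C_geom · q^(α/d)` points, then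
`∑_t ν(t)² ≤ C_geom · |E|² · q^(d-1+α/d) + |E|⁴/q`. -/
theorem stmt_12 {F : Type*} [Field F] [Fintype F] [DecidableEq F] (d : ℕ) (hd : 0 < d)
    (Cgeom α : ℝ) (hCgeom : 0 < Cgeom) (hα0 : 0 ≤ α) (hαd : α ≤ d)
    (E : Finset (Fin d → F)) (h0 : (0 : Fin d → F) ∉ E)
    (hline : ∀ y : Fin d → F, y ≠ 0 →
      (Set.ncard ((E : Set (Fin d → F)) ∩ {x | ∃ t : F, x = t • y}) : ℝ) ≤
        Cgeom * (Fintype.card F : ℝ) ^ (α / d)) :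
    ∑ t : F, (((E ×ˢ E).filter (fun p => ∑ i, p.1 i * p.2 i = t)).card : ℝ) ^ 2 ≤
      Cgeom * (E.card : ℝ) ^ 2 * (Fintype.card F : ℝ) ^ ((d : ℝ) - 1 + α / d) +
        (E.card : ℝ) ^ 4 / (Fintype.card F : ℝ) :=
  stmt_12_general d Cgeom α hCgeom E h0 hline
end
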